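/- arXiv:2305.16639 — 6 statements merged into one kernel-verified Lean document; each statement's English description precedes it below -/
import Mathlib

section
/- Let N ∈ ℕ ∪ {∞}; let E be a topological space; let g₀ ∈ C_B((0,∞)) separate and strongly separate points on (0,∞); let M = {g_i}_{i=2}^N ⊆ C_B(E) be countable, separate points, strongly separate points, and be closed under multiplication; and for each n ∈ ℕ let F_n ⊆ C(ℝⁿ) be uniformly dense on compacts of ℝⁿ. Then the distributional neural networks 𝔇_{g₀}(M,{F_n}), i.e. the maps μ ↦ f( g₀(μ(E)), ∫_E g₂ d(μ/μ(E)), …, ∫_E g_n d(μ/μ(E)) ) with n ∈ ℕ, f ∈ F_n and g₂,…,g_n ∈ M, form a uniformly dense subset of C_U(M⁺(E), 𝔖_{𝔚_{g₀}[M]}). Moreover, 𝔖_{𝔚_{g₀}[M]} equals the metric uniformity generated by the metric d(μ,ν) = ( |g₀(μ(E)) − g₀(ν(E))| ∧ 1 ) + Σ_{i=2}^N 2^{−i} ( | ∫ g_i d(μ/μ(E)) − ∫ g_i d(ν/ν(E)) | ∧ 1 ). -/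
open Set Filter Topology MeasureTheory

/-- `D` separates points on the subset `A ⊆ X`. -/
def SepPtsOn {X : Type*} (D : Set (X → ℝ)) (A : Set X) : Prop :=
  ∀ x ∈ A, ∀ y ∈ A, x ≠ y → ∃ f ∈ D, f x ≠ f y

/-- `D` strongly separates points on the subset `A ⊆ X` (subspace topology). -/
def SSepPtsOn {X : Type*} [TopologicalSpace X] (D : Set (X → ℝ)) (A : Set X) : Prop :=
  ∀ x ∈ A, ∀ O : Set X, IsOpen O → x ∈ O →
    ∃ (k : ℕ) (f : Fin k → X → ℝ), (∀ i, f i ∈ D) ∧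
      ∃ ε > (0 : ℝ), ∀ y ∈ A \ O, ∃ i, ε ≤ |f i y - f i x|

/-- A family `D` of real-valued functions separates points on `X`. -/
def SepPts {X : Type*} (D : Set (X → ℝ)) : Prop :=
  ∀ x y : X, x ≠ y → ∃ g ∈ D, g x ≠ g y

/-- A family `M` strongly separates points on the topological space `X`. -/
def SSepPts {X : Type*} [TopologicalSpace X] (M : Set (X → ℝ)) : Prop :=
  ∀ (x : X) (O : Set X), IsOpen O → x ∈ O →
    ∃ (k : ℕ) (g : Fin k → X → ℝ), (∀ i, g i ∈ M) ∧
      ∃ ε > (0 : ℝ), ∀ y, y ∉ O → ∃ i, ε ≤ |g i y - g i x|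

/-- `F` is uniformly dense in `G`. -/
def UnifDense {X : Type*} (F G : Set (X → ℝ)) : Prop :=
  ∀ g ∈ G, ∀ ε > 0, ∃ f ∈ F, ∀ x, |f x - g x| < ε

/-- `F ⊆ C(ℝⁿ)` is uniformly dense on the compacts of `ℝⁿ`. -/
def DenseOnCompacts {n : ℕ} (F : Set ((Fin n → ℝ) → ℝ)) : Prop :=
  (∀ f ∈ F, Continuous f) ∧
  ∀ K : Set (Fin n → ℝ), IsCompact K → ∀ g : (Fin n → ℝ) → ℝ, ContinuousOn g K →
    ∀ ε > 0, ∃ f ∈ F, ∀ x ∈ K, |f x - g x| < ε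

/-- The uniformity `𝔖_D` on `Y`: the pullback of the product uniformity of `ℝ^D`
along the evaluation map `y ↦ (g(y))_{g ∈ D}`. -/
noncomputable def SM {Y : Type*} (D : Set (Y → ℝ)) : UniformSpace Y :=
  UniformSpace.comap (fun y (g : D) => (g : Y → ℝ) y) inferInstance

/-- `C_U(Y, u)`: real-valued functions on `Y` uniformly continuous for `u`. -/
def CU {Y : Type*} (u : UniformSpace Y) : Set (Y → ℝ) :=
  { φ | @UniformContinuous Y ℝ u inferInstance φ }

/-- The nonzero finite Borel measures on `E`. -/
abbrev Mplus (E : Type*) [MeasurableSpace E] : Type _ :=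
  {μ : Measure E // IsFiniteMeasure μ ∧ μ ≠ 0}

/-- The weak topology on `M⁺(E)`. -/
noncomputable instance MplusTop (E : Type*) [TopologicalSpace E] [MeasurableSpace E] :
    TopologicalSpace (Mplus E) :=
  ⨅ f : BoundedContinuousFunction E ℝ,
    TopologicalSpace.induced (fun μ : Mplus E => ∫ x, f x ∂(μ.1)) inferInstance

/-- The normalization `μ/μ(E)` of a nonzero finite measure. -/
noncomputable def nrm {E : Type*} [MeasurableSpace E] (μ : Mplus E) : Measure E :=
  (μ.1 Set.univ)⁻¹ • μ.1

/-- The functionals `𝔚_{g₀}[D]` on `M⁺(E)`: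
`{ μ ↦ ∫ g d(μ/μ(E)) : g ∈ D } ∪ { μ ↦ g₀(μ(E)) }`. -/
noncomputable def Wfun {E : Type*} [TopologicalSpace E] [MeasurableSpace E]
    (g₀ : ℝ → ℝ) (D : Set (E → ℝ)) : Set (Mplus E → ℝ) :=
  { F | (∃ g ∈ D, F = fun μ => ∫ x, g x ∂(nrm μ)) ∨
        F = fun μ => g₀ ((μ.1 Set.univ).toReal) }

/-- The distributional neural networks `𝔇_{g₀}(D, {F_n})`:
`μ ↦ f(g₀(μ(E)), ∫ g₂ d(μ/μ(E)), …, ∫ g_n d(μ/μ(E)))` with `f ∈ F_n`, `g_i ∈ D`. -/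
noncomputable def DNN {E : Type*} [TopologicalSpace E] [MeasurableSpace E]
    (g₀ : ℝ → ℝ) (D : Set (E → ℝ)) (F : ∀ n : ℕ, Set ((Fin n → ℝ) → ℝ)) :
    Set (Mplus E → ℝ) :=
  { φ | ∃ n : ℕ, 0 < n ∧ ∃ (f : (Fin n → ℝ) → ℝ) (h : Fin n → E → ℝ),
      f ∈ F n ∧ (∀ i : Fin n, i.1 ≠ 0 → h i ∈ D) ∧
      φ = fun μ => f fun i =>
        if i.1 = 0 then g₀ ((μ.1 Set.univ).toReal) else ∫ x, h i x ∂(nrm μ) }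

set_option linter.unusedSectionVars false
set_option linter.unusedVariables false
namespace S2
lemma half_pow (i : ℕ) : (2:ℝ) ^ (-(i:ℤ)) = (1/2)^i := by
  rw [zpow_neg, zpow_natCast, one_div, inv_pow]

lemma lt_of_min_lt {x δ : ℝ} (h : min |x| 1 < min δ 1) : |x| < δ := by
  have h1 : min |x| 1 < 1 := h.trans_le (min_le_right _ _)
  have hx : |x| < 1 := by
    by_contra hc
    push_neg at hc
    simp [min_eq_right hc] at h1
  have : |x| < min δ 1 := by rwa [min_eq_left hx.le] at h
  exact this.trans_le (min_le_left _ _)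

lemma summable_sub {S : Set ℕ} (t : S → ℝ) (h0 : ∀ i, 0 ≤ t i) (h1 : ∀ i, t i ≤ 1) :
    Summable (fun i : S => (2:ℝ)^(-(i.1:ℤ)) * t i) := by
  refine Summable.of_nonneg_of_le (fun i => mul_nonneg (by positivity) (h0 i)) (fun i => ?_)
    ((summable_geometric_of_lt_one (by norm_num) (by norm_num : (1/2:ℝ) < 1)).subtype S)
  calc (2:ℝ)^(-(i.1:ℤ)) * t i ≤ (2:ℝ)^(-(i.1:ℤ)) * 1 := by
        exact mul_le_mul_of_nonneg_left (h1 i) (by positivity)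
    _ = (1/2:ℝ)^(i.1) := by rw [mul_one, half_pow]
    _ = ((fun n : ℕ => (1/2:ℝ)^n) ∘ Subtype.val) i := rfl

lemma tsum_cutoff_le {S : Set ℕ} (t : S → ℝ) (h0 : ∀ i, 0 ≤ t i) (h1 : ∀ i, t i ≤ 1)
    {δ : ℝ} (hδ : 0 ≤ δ) {n₀ : ℕ} (hsmall : ∀ i : S, i.1 < n₀ → t i ≤ δ) :
    ∑' i : S, (2:ℝ)^(-(i.1:ℤ)) * t i ≤ 2*δ + 2*(1/2)^n₀ := by
  set v : ℕ → ℝ := fun j => if j < n₀ then (1/2:ℝ)^j * δ else (1/2)^j with hv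
  have hvnn : ∀ j, 0 ≤ v j := by
    intro j; simp only [hv]; split <;> positivity
  have hvs : Summable v := by
    refine Summable.of_nonneg_of_le hvnn (fun j => ?_)
      (((summable_geometric_of_lt_one (by norm_num) (by norm_num : (1/2:ℝ) < 1))).mul_right (max δ 1))
    simp only [hv]
    split
    · exact mul_le_mul_of_nonneg_left (le_max_left _ _) (by positivity)
    · exact le_mul_of_one_le_right (by positivity) (le_max_right _ _)
  have hle : ∀ i : S, (2:ℝ)^(-(i.1:ℤ)) * t i ≤ v i.1 := by
    intro i
    rw [half_pow]
    simp only [hv]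
    split
    next h => exact mul_le_mul_of_nonneg_left (hsmall i h) (by positivity)
    next h => calc (1/2:ℝ)^(i.1) * t i ≤ (1/2:ℝ)^(i.1) * 1 :=
          mul_le_mul_of_nonneg_left (h1 i) (by positivity)
        _ = _ := mul_one _
  calc ∑' i : S, (2:ℝ)^(-(i.1:ℤ)) * t i ≤ ∑' i : S, v i.1 := by
        refine Summable.tsum_le_tsum hle (summable_sub t h0 h1) ?_
        exact hvs.subtype S
    _ ≤ ∑' j : ℕ, v j := Summable.tsum_subtype_le v S hvnn hvs
    _ = ∑ j ∈ Finset.range n₀, v j + ∑' j : ℕ, v (j + n₀) := (Summable.sum_add_tsum_nat_add n₀ hvs).symm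
    _ ≤ 2*δ + 2*(1/2)^n₀ := by
        have hA : ∑ j ∈ Finset.range n₀, v j ≤ 2*δ := by
          have ha : ∑ j ∈ Finset.range n₀, v j ≤ ∑ j ∈ Finset.range n₀, (1/2:ℝ)^j * δ :=
            Finset.sum_le_sum (fun j hj => by
              simp only [hv, if_pos (Finset.mem_range.1 hj)]; exact le_rfl)
          refine ha.trans ?_
          rw [← Finset.sum_mul]
          exact mul_le_mul_of_nonneg_right (sum_geometric_two_le n₀) hδ
        have hB : ∑' j : ℕ, v (j + n₀) ≤ 2*(1/2)^n₀ := by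
          have hc : ∀ j : ℕ, v (j + n₀) = (1/2:ℝ)^n₀ * (1/2)^j := fun j => by
            simp only [hv, if_neg (by omega : ¬ j + n₀ < n₀), pow_add, mul_comm]
          rw [tsum_congr hc, tsum_mul_left, tsum_geometric_two]
          exact le_of_eq (mul_comm _ _)
        exact add_le_add hA hB
section
variable {E : Type*} [TopologicalSpace E] [MeasurableSpace E] [BorelSpace E]

lemma nrm_isProb (μ : Mplus E) : IsProbabilityMeasure (nrm μ) := by
  haveI := μ.2.1
  constructor
  have h1 : μ.1 Set.univ ≠ 0 := MeasureTheory.Measure.measure_univ_ne_zero.2 μ.2.2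
  have h2 : μ.1 Set.univ ≠ ⊤ := (measure_lt_top μ.1 _).ne
  simp [nrm, Measure.smul_apply, smul_eq_mul, ENNReal.inv_mul_cancel h1 h2]

lemma mass_pos (μ : Mplus E) : (μ.1 Set.univ).toReal ∈ Set.Ioi (0:ℝ) := by
  haveI := μ.2.1
  exact ENNReal.toReal_pos (MeasureTheory.Measure.measure_univ_ne_zero.2 μ.2.2)
    (measure_lt_top μ.1 _).ne

lemma abs_integral_le (μ : Mplus E) {f : E → ℝ} {C : ℝ} (hC : ∀ x, |f x| ≤ C) :
    |∫ x, f x ∂(nrm μ)| ≤ C := by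
  haveI := nrm_isProb μ
  have h := MeasureTheory.norm_integral_le_of_norm_le_const (μ := nrm μ) (f := f) (C := C)
    (Filter.Eventually.of_forall fun x => by simpa [Real.norm_eq_abs] using hC x)
  simpa [Real.norm_eq_abs, measure_univ] using h

variable (N : ℕ∞) (g₀ : ℝ → ℝ) (g : ℕ → E → ℝ)

/-- The metric. -/
noncomputable def dd (μ ν : Mplus E) : ℝ :=
  min |g₀ ((μ.1 Set.univ).toReal) - g₀ ((ν.1 Set.univ).toReal)| 1 +
    (∑' i : {i : ℕ // 2 ≤ i ∧ (i : ℕ∞) ≤ N},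
      (2 : ℝ) ^ (-(i.1 : ℤ)) *
        min |(∫ x, g i.1 x ∂(nrm μ)) - ∫ x, g i.1 x ∂(nrm ν)| 1)

variable {N g₀ g}

lemma term_nonneg (μ ν : Mplus E) (i : {i : ℕ // 2 ≤ i ∧ (i : ℕ∞) ≤ N}) :
    0 ≤ (2 : ℝ) ^ (-(i.1 : ℤ)) *
      min |(∫ x, g i.1 x ∂(nrm μ)) - ∫ x, g i.1 x ∂(nrm ν)| 1 := by
  refine mul_nonneg (by positivity) (le_min (abs_nonneg _) one_pos.le)

lemma summable_term (μ ν : Mplus E) :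
    Summable (fun i : {i : ℕ // 2 ≤ i ∧ (i : ℕ∞) ≤ N} =>
      (2 : ℝ) ^ (-(i.1 : ℤ)) *
        min |(∫ x, g i.1 x ∂(nrm μ)) - ∫ x, g i.1 x ∂(nrm ν)| 1) :=
  summable_sub (S := {i : ℕ | 2 ≤ i ∧ (i : ℕ∞) ≤ N}) _
    (fun i => le_min (abs_nonneg _) one_pos.le) (fun i => min_le_right _ _)

lemma L0 (μ ν : Mplus E) :
    min |g₀ ((μ.1 Set.univ).toReal) - g₀ ((ν.1 Set.univ).toReal)| 1 ≤ dd N g₀ g μ ν :=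
  le_add_of_nonneg_right (tsum_nonneg (term_nonneg μ ν))

lemma Lj (μ ν : Mplus E) {j : ℕ} (hj2 : 2 ≤ j) (hjN : (j : ℕ∞) ≤ N) :
    (2 : ℝ) ^ (-(j : ℤ)) *
      min |(∫ x, g j x ∂(nrm μ)) - ∫ x, g j x ∂(nrm ν)| 1 ≤ dd N g₀ g μ ν := by
  refine le_add_of_nonneg_of_le (le_min (abs_nonneg _) one_pos.le) ?_
  exact Summable.le_tsum (summable_term μ ν) ⟨j, hj2, hjN⟩ (fun k _ => term_nonneg μ ν k)

lemma dd_lt (μ ν : Mplus E) {δ : ℝ} (hδ : 0 < δ) {n₀ : ℕ}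
    (htail : 2*(1/2:ℝ)^n₀ ≤ δ/4)
    (h0 : |g₀ ((μ.1 Set.univ).toReal) - g₀ ((ν.1 Set.univ).toReal)| ≤ δ/8)
    (hj : ∀ j : ℕ, 2 ≤ j → (j : ℕ∞) ≤ N → j < n₀ →
      |(∫ x, g j x ∂(nrm μ)) - ∫ x, g j x ∂(nrm ν)| ≤ δ/8) :
    dd N g₀ g μ ν < δ := by
  have hts : (∑' i : {i : ℕ // 2 ≤ i ∧ (i : ℕ∞) ≤ N},
      (2 : ℝ) ^ (-(i.1 : ℤ)) *
        min |(∫ x, g i.1 x ∂(nrm μ)) - ∫ x, g i.1 x ∂(nrm ν)| 1)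
      ≤ 2*(δ/8) + 2*(1/2)^n₀ := by
    refine tsum_cutoff_le _ (fun i => le_min (abs_nonneg _) one_pos.le)
      (fun i => min_le_right _ _) (by positivity) (fun i hi => ?_)
    exact le_trans (min_le_left _ _) (hj i.1 i.2.1 i.2.2 hi)
  have h1 : min |g₀ ((μ.1 Set.univ).toReal) - g₀ ((ν.1 Set.univ).toReal)| 1 ≤ δ/8 :=
    le_trans (min_le_left _ _) h0
  have : dd N g₀ g μ ν ≤ δ/8 + (2*(δ/8) + 2*(1/2)^n₀) := add_le_add h1 hts
  linarith

end
section
open scoped Uniformity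
variable {E : Type*} [TopologicalSpace E] [MeasurableSpace E] [BorelSpace E]
variable {N : ℕ∞} {g₀ : ℝ → ℝ} {g : ℕ → E → ℝ} {M : Set (E → ℝ)}

lemma uniformity_eq (hMenum : M = g '' {i : ℕ | 2 ≤ i ∧ (i : ℕ∞) ≤ N}) :
    @uniformity (Mplus E) (SM (Wfun g₀ M)) =
      ⨅ (ε : ℝ) (_ : 0 < ε), Filter.principal {p : Mplus E × Mplus E | dd N g₀ g p.1 p.2 < ε} := by
  classical
  have hA : @uniformity (Mplus E) (SM (Wfun g₀ M)) =
      ⨅ F : Wfun g₀ M, ⨅ (ε : ℝ) (_ : 0 < ε),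
        Filter.principal {p : Mplus E × Mplus E | |F.1 p.1 - F.1 p.2| < ε} := by
    have h1 : @uniformity (Mplus E) (SM (Wfun g₀ M)) =
        Filter.comap (Prod.map (fun μ (F : Wfun g₀ M) => F.1 μ)
          (fun μ (F : Wfun g₀ M) => F.1 μ)) (𝓤 ((Wfun g₀ M) → ℝ)) := by
      unfold SM
      exact uniformity_comap _
    rw [h1, Pi.uniformity, Filter.comap_iInf]
    refine iInf_congr fun F => ?_
    rw [Filter.comap_comap]
    have h2 : ((fun a : ((Wfun g₀ M) → ℝ) × ((Wfun g₀ M) → ℝ) => (a.1 F, a.2 F)) ∘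
        (Prod.map (fun μ (F : Wfun g₀ M) => F.1 μ) (fun μ (F : Wfun g₀ M) => F.1 μ))) =
        fun p : Mplus E × Mplus E => (F.1 p.1, F.1 p.2) := rfl
    rw [h2, (Metric.uniformity_basis_dist.comap
      (fun p : Mplus E × Mplus E => (F.1 p.1, F.1 p.2))).eq_biInf]
    simp only [Set.preimage_setOf_eq, Real.dist_eq]
  rw [hA]
  apply le_antisymm
  · refine le_iInf fun ε => le_iInf fun hε => ?_
    rw [le_principal_iff]
    obtain ⟨n₀, hn₀⟩ : ∃ n₀ : ℕ, 2*(1/2:ℝ)^n₀ ≤ ε/4 := by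
      obtain ⟨n₀, h⟩ := exists_pow_lt_of_lt_one (show (0:ℝ) < ε/16 by linarith)
        (by norm_num : (1/2:ℝ) < 1)
      exact ⟨n₀, by linarith⟩
    set T0 : Set (Mplus E × Mplus E) :=
      {p | |g₀ ((p.1.1 Set.univ).toReal) - g₀ ((p.2.1 Set.univ).toReal)| < ε/8} with hT0
    set Tj : ℕ → Set (Mplus E × Mplus E) := fun j =>
      if (2 ≤ j ∧ (j : ℕ∞) ≤ N) then
        {p | |(∫ x, g j x ∂(nrm p.1)) - ∫ x, g j x ∂(nrm p.2)| < ε/8} else Set.univ with hTj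
    have hT0mem : T0 ∈ ⨅ F : Wfun g₀ M, ⨅ (ε : ℝ) (_ : 0 < ε),
        Filter.principal {p : Mplus E × Mplus E | |F.1 p.1 - F.1 p.2| < ε} := by
      refine Filter.mem_iInf_of_mem
        ⟨fun μ => g₀ ((μ.1 Set.univ).toReal), Or.inr rfl⟩ ?_
      exact Filter.mem_iInf_of_mem (ε/8) (Filter.mem_iInf_of_mem (by linarith)
        (Filter.mem_principal_self _))
    have hTjmem : ∀ j : ℕ, Tj j ∈ ⨅ F : Wfun g₀ M, ⨅ (ε : ℝ) (_ : 0 < ε),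
        Filter.principal {p : Mplus E × Mplus E | |F.1 p.1 - F.1 p.2| < ε} := by
      intro j
      simp only [hTj]
      split
      next hval =>
        refine Filter.mem_iInf_of_mem
          ⟨fun μ => ∫ x, g j x ∂(nrm μ), Or.inl ⟨g j, by
            rw [hMenum]; exact Set.mem_image_of_mem _ hval, rfl⟩⟩ ?_
        exact Filter.mem_iInf_of_mem (ε/8) (Filter.mem_iInf_of_mem (by linarith)
          (Filter.mem_principal_self _))
      next => exact Filter.univ_mem
    refine Filter.mem_of_superset
      (Filter.inter_mem hT0mem ((Filter.biInter_finset_mem (Finset.range n₀)).2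
        fun j _ => hTjmem j)) ?_
    rintro p ⟨hp0, hpj⟩
    simp only [Set.mem_iInter] at hpj
    refine dd_lt p.1 p.2 hε hn₀ (le_of_lt hp0) ?_
    intro j hj2 hjN hjn₀
    have := hpj j (Finset.mem_range.2 hjn₀)
    simp only [hTj, if_pos (And.intro hj2 hjN)] at this
    exact le_of_lt this
  · refine le_iInf fun F => le_iInf fun ε => le_iInf fun hε => ?_
    rw [le_principal_iff]
    rcases F.2 with ⟨gg, hggM, hFg⟩ | hF0
    · rw [hMenum] at hggM
      obtain ⟨j, hjval, rfl⟩ := hggM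
      have hpos : (0:ℝ) < (2:ℝ) ^ (-(j : ℤ)) := by positivity
      refine Filter.mem_iInf_of_mem ((2:ℝ) ^ (-(j : ℤ)) * min ε 1) ?_
      refine Filter.mem_iInf_of_mem (by positivity : (0:ℝ) < (2:ℝ) ^ (-(j : ℤ)) * min ε 1) ?_
      rw [Filter.mem_principal]
      intro p hp
      simp only [Set.mem_setOf_eq] at hp ⊢
      have h1 := (Lj (g₀ := g₀) p.1 p.2 hjval.1 hjval.2).trans_lt hp
      have h2 : min |(∫ x, g j x ∂(nrm p.1)) - ∫ x, g j x ∂(nrm p.2)| 1 < min ε 1 :=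
        lt_of_mul_lt_mul_left h1 hpos.le
      have h3 := lt_of_min_lt h2
      rw [hFg]
      exact h3
    · refine Filter.mem_iInf_of_mem (min ε 1) ?_
      refine Filter.mem_iInf_of_mem (lt_min hε one_pos) ?_
      rw [Filter.mem_principal]
      intro p hp
      simp only [Set.mem_setOf_eq] at hp ⊢
      have h1 := (L0 (g := g) p.1 p.2).trans_lt hp
      rw [hF0]
      exact lt_of_min_lt h1
end
section
open scoped Uniformity
variable {E : Type*} [TopologicalSpace E] [MeasurableSpace E] [BorelSpace E]
variable {N : ℕ∞} {g₀ : ℝ → ℝ} {g : ℕ → E → ℝ} {M : Set (E → ℝ)}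

lemma dd_basis :
    (⨅ (ε : ℝ) (_ : 0 < ε),
      Filter.principal {p : Mplus E × Mplus E | dd N g₀ g p.1 p.2 < ε}).HasBasis
      (fun ε : ℝ => 0 < ε) (fun ε => {p : Mplus E × Mplus E | dd N g₀ g p.1 p.2 < ε}) := by
  refine Filter.hasBasis_biInf_principal'
    (fun ε hε ε' hε' => ⟨min ε ε', lt_min hε hε', ?_, ?_⟩) ⟨1, one_pos⟩
  · exact fun p (hp : dd N g₀ g p.1 p.2 < min ε ε') =>
      show dd N g₀ g p.1 p.2 < ε from lt_of_lt_of_le hp (min_le_left _ _)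
  · exact fun p (hp : dd N g₀ g p.1 p.2 < min ε ε') =>
      show dd N g₀ g p.1 p.2 < ε' from lt_of_lt_of_le hp (min_le_right _ _)

lemma uc_iff (hMenum : M = g '' {i : ℕ | 2 ≤ i ∧ (i : ℕ∞) ≤ N}) (φ : Mplus E → ℝ) :
    φ ∈ CU (SM (Wfun g₀ M)) ↔
      ∀ ε > (0:ℝ), ∃ δ > (0:ℝ), ∀ μ ν : Mplus E,
        dd N g₀ g μ ν < δ → |φ μ - φ ν| < ε := by
  have h : φ ∈ CU (SM (Wfun g₀ M)) ↔
      Filter.Tendsto (fun p : Mplus E × Mplus E => (φ p.1, φ p.2))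
        (@uniformity (Mplus E) (SM (Wfun g₀ M))) (𝓤 ℝ) := Iff.rfl
  rw [h, uniformity_eq (g := g) hMenum,
    (dd_basis).tendsto_iff Metric.uniformity_basis_dist]
  simp only [Real.dist_eq, Set.mem_setOf_eq, Prod.forall]

/-- The evaluation vector. -/
noncomputable def Vm (g₀ : ℝ → ℝ) {n : ℕ} (h : Fin n → E → ℝ) (μ : Mplus E) :
    Fin n → ℝ :=
  fun i => if i.1 = 0 then g₀ ((μ.1 Set.univ).toReal) else ∫ x, h i x ∂(nrm μ)

lemma Vm_bound (hg₀b : ∃ C, ∀ x ∈ Set.Ioi (0:ℝ), |g₀ x| ≤ C)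
    (hMb : ∀ f ∈ M, ∃ C, ∀ x, |f x| ≤ C) {n : ℕ} {h : Fin n → E → ℝ}
    (hh : ∀ i : Fin n, i.1 ≠ 0 → h i ∈ M) :
    ∃ c : Fin n → ℝ, ∀ (μ : Mplus E) (i : Fin n), |Vm g₀ h μ i| ≤ c i := by
  classical
  obtain ⟨C0, hC0⟩ := hg₀b
  have hc : ∀ i : Fin n, ∃ ci : ℝ, ∀ μ : Mplus E, |Vm g₀ h μ i| ≤ ci := by
    intro i
    by_cases h0 : i.1 = 0
    · exact ⟨C0, fun μ => by simp only [Vm, if_pos h0]; exact hC0 _ (mass_pos μ)⟩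
    · obtain ⟨ci, hci⟩ := hMb (h i) (hh i h0)
      exact ⟨ci, fun μ => by simp only [Vm, if_neg h0]; exact abs_integral_le μ hci⟩
  choose c hcs using hc
  exact ⟨c, fun μ i => hcs i μ⟩

lemma dnn_sub_cu {F : ∀ n : ℕ, Set ((Fin n → ℝ) → ℝ)}
    (hMenum : M = g '' {i : ℕ | 2 ≤ i ∧ (i : ℕ∞) ≤ N})
    (hg₀b : ∃ C, ∀ x ∈ Set.Ioi (0:ℝ), |g₀ x| ≤ C)
    (hMb : ∀ f ∈ M, ∃ C, ∀ x, |f x| ≤ C)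
    (hF : ∀ n, DenseOnCompacts (F n)) :
    DNN g₀ M F ⊆ CU (SM (Wfun g₀ M)) := by
  classical
  intro φ hφ
  obtain ⟨n, hn, f, h, hfF, hhM, rfl⟩ := hφ
  rw [uc_iff (g := g) hMenum]
  intro ε hε
  obtain ⟨c, hc⟩ := Vm_bound hg₀b hMb hhM
  set K : Set (Fin n → ℝ) := Set.univ.pi (fun i => Set.Icc (-(c i)) (c i)) with hK
  have hKc : IsCompact K := isCompact_univ_pi (fun i => isCompact_Icc)
  have hmemK : ∀ μ : Mplus E, Vm g₀ h μ ∈ K := fun μ =>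
    Set.mem_univ_pi.2 fun i => by
      have := abs_le.1 (hc μ i); exact ⟨this.1, this.2⟩
  have hfc : Continuous f := (hF n).1 f hfF
  obtain ⟨δ', hδ', Hf⟩ := Metric.uniformContinuousOn_iff.1
    (hKc.uniformContinuousOn_of_continuous hfc.continuousOn) ε hε
  have hsel : ∀ i : Fin n, i.1 ≠ 0 → ∃ j : ℕ, (2 ≤ j ∧ (j:ℕ∞) ≤ N) ∧ g j = h i := by
    intro i hi
    have hmem := hhM i hi
    rw [hMenum] at hmem
    obtain ⟨j, hj, hgj⟩ := hmem
    exact ⟨j, hj, hgj⟩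
  set j : Fin n → ℕ := fun i => if hi : i.1 = 0 then 2 else (hsel i hi).choose with hjdef
  set Jm : ℕ := Finset.univ.sup j with hJm
  have hpos1 : (0:ℝ) < min δ' 1 := lt_min hδ' one_pos
  refine ⟨min δ' 1 * (2:ℝ)^(-(Jm:ℤ)), by positivity, fun μ ν hdd => ?_⟩
  have hcoord : ∀ i : Fin n, |Vm g₀ h μ i - Vm g₀ h ν i| < δ' := by
    intro i
    by_cases h0 : i.1 = 0
    · have h1 : dd N g₀ g μ ν < min δ' 1 := by
        refine hdd.trans_le ?_
        calc min δ' 1 * (2:ℝ)^(-(Jm:ℤ)) ≤ min δ' 1 * 1 :=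
            mul_le_mul_of_nonneg_left
              (zpow_le_one_of_nonpos₀ one_le_two (by simp)) hpos1.le
          _ = min δ' 1 := mul_one _
      have h3 := lt_of_min_lt ((L0 (g := g) μ ν).trans_lt h1)
      simpa only [Vm, if_pos h0] using h3
    · have hji : j i = (hsel i h0).choose := by simp only [hjdef, dif_neg h0]
      obtain ⟨hjval, hgj⟩ := (hsel i h0).choose_spec
      have hgj2 : g (j i) = h i := by rw [hji]; exact hgj
      have hjval2 : 2 ≤ j i ∧ ((j i : ℕ) : ℕ∞) ≤ N := by rw [hji]; exact hjval
      have hle2 : (2:ℝ)^(-(Jm:ℤ)) ≤ (2:ℝ)^(-((j i):ℤ)) := by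
        refine zpow_le_zpow_right₀ one_le_two ?_
        have : j i ≤ Jm := Finset.le_sup (Finset.mem_univ i)
        exact neg_le_neg (by exact_mod_cast this)
      have h1 : dd N g₀ g μ ν < (2:ℝ)^(-((j i):ℤ)) * min δ' 1 := by
        refine hdd.trans_le ?_
        calc min δ' 1 * (2:ℝ)^(-(Jm:ℤ)) ≤ min δ' 1 * (2:ℝ)^(-((j i):ℤ)) :=
            mul_le_mul_of_nonneg_left hle2 hpos1.le
          _ = (2:ℝ)^(-((j i):ℤ)) * min δ' 1 := mul_comm _ _
      have h2 := (Lj (g₀ := g₀) μ ν hjval2.1 hjval2.2).trans_lt h1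
      have h3 : min |(∫ x, g (j i) x ∂(nrm μ)) - ∫ x, g (j i) x ∂(nrm ν)| 1
          < min δ' 1 := lt_of_mul_lt_mul_left h2 (by positivity)
      have h4 := lt_of_min_lt h3
      rw [hgj2] at h4
      simpa only [Vm, if_neg h0] using h4
  have hVd : dist (Vm g₀ h μ) (Vm g₀ h ν) < δ' :=
    (dist_pi_lt_iff hδ').2 (fun i => by rw [Real.dist_eq]; exact hcoord i)
  have hfin := Hf _ (hmemK μ) _ (hmemK ν) hVd
  rw [Real.dist_eq] at hfin
  exact hfin
end
section
open scoped Uniformity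
variable {E : Type*} [TopologicalSpace E] [MeasurableSpace E] [BorelSpace E]
variable {N : ℕ∞} {g₀ : ℝ → ℝ} {g : ℕ → E → ℝ} {M : Set (E → ℝ)}

lemma exists_V (hMenum : M = g '' {i : ℕ | 2 ≤ i ∧ (i : ℕ∞) ≤ N}) {δ : ℝ} (hδ : 0 < δ) :
    ∃ n : ℕ, 0 < n ∧ ∃ h : Fin n → E → ℝ, (∀ i : Fin n, i.1 ≠ 0 → h i ∈ M) ∧
      ∀ μ ν : Mplus E, (∀ i : Fin n, |Vm g₀ h μ i - Vm g₀ h ν i| < δ/8) →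
        dd N g₀ g μ ν < δ := by
  classical
  obtain ⟨n₀, hn₀⟩ : ∃ n₀ : ℕ, 2*(1/2:ℝ)^n₀ ≤ δ/4 := by
    obtain ⟨n₀, hx⟩ := exists_pow_lt_of_lt_one (show (0:ℝ) < δ/16 by linarith)
      (by norm_num : (1/2:ℝ) < 1)
    exact ⟨n₀, by linarith⟩
  set Iset : Finset ℕ := (Finset.range n₀).filter (fun j => 2 ≤ j ∧ (j:ℕ∞) ≤ N) with hIset
  set k := Iset.card with hk
  set e := Iset.orderIsoOfFin rfl with he
  set h : Fin (k+1) → E → ℝ :=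
    Fin.cases (fun _ => (0:ℝ)) (fun i : Fin k => g (e i).1) with hh
  have hmem : ∀ i : Fin (k+1), i.1 ≠ 0 → h i ∈ M := by
    intro i hi
    have hine : i ≠ 0 := by
      intro hz; apply hi; rw [hz]; rfl
    obtain ⟨i', rfl⟩ := Fin.eq_succ_of_ne_zero hine
    have hIe : ((e i').1 : ℕ) ∈ Iset := (e i').2
    simp only [hIset, Finset.mem_filter, Finset.mem_range] at hIe
    rw [hMenum]
    simp only [hh, Fin.cases_succ]
    exact Set.mem_image_of_mem _ ⟨hIe.2.1, hIe.2.2⟩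
  refine ⟨k+1, Nat.succ_pos _, h, hmem, ?_⟩
  intro μ ν hcl
  refine dd_lt μ ν hδ hn₀ ?_ ?_
  · have h0 := hcl 0
    have hv : ∀ ρ : Mplus E, Vm g₀ h ρ 0 = g₀ ((ρ.1 Set.univ).toReal) := by
      intro ρ; simp [Vm]
    rw [hv, hv] at h0
    exact le_of_lt h0
  · intro jj hj2 hjN hjn₀
    have hjmem : jj ∈ Iset := by
      simp only [hIset, Finset.mem_filter, Finset.mem_range]
      exact ⟨hjn₀, hj2, hjN⟩
    set idx : Fin k := e.symm ⟨jj, hjmem⟩ with hidx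
    have h1 := hcl idx.succ
    have hv : ∀ ρ : Mplus E, Vm g₀ h ρ idx.succ = ∫ x, g jj x ∂(nrm ρ) := by
      intro ρ
      have hnz : (idx.succ : Fin (k+1)).1 ≠ 0 := by simp [Fin.val_succ]
      simp only [Vm, if_neg hnz, hh, Fin.cases_succ]
      have : (e idx).1 = jj := by rw [hidx, OrderIso.apply_symm_apply]
      rw [this]
    rw [hv, hv] at h1
    exact le_of_lt h1

set_option maxHeartbeats 1000000 in
lemma bounded_of_uc (mu0 : Mplus E)
    (hMenum : M = g '' {i : ℕ | 2 ≤ i ∧ (i : ℕ∞) ≤ N})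
    (hg₀b : ∃ C, ∀ x ∈ Set.Ioi (0:ℝ), |g₀ x| ≤ C)
    (hMb : ∀ f ∈ M, ∃ C, ∀ x, |f x| ≤ C) (φ : Mplus E → ℝ)
    (huc : ∃ δ > (0:ℝ), ∀ μ ν : Mplus E, dd N g₀ g μ ν < δ → |φ μ - φ ν| < 1) :
    ∃ B : ℝ, 0 ≤ B ∧ ∀ μ ν : Mplus E, |φ μ - φ ν| ≤ B := by
  classical
  obtain ⟨δ, hδ, H⟩ := huc
  obtain ⟨n, hn, h, hhM, HV⟩ := exists_V (g₀ := g₀) hMenum hδ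
  obtain ⟨c, hc⟩ := Vm_bound hg₀b hMb hhM
  set K : Set (Fin n → ℝ) := Set.univ.pi (fun i => Set.Icc (-(c i)) (c i)) with hK
  have hKc : IsCompact K := isCompact_univ_pi (fun i => isCompact_Icc)
  have hmemK : ∀ μ : Mplus E, Vm g₀ h μ ∈ K := fun μ =>
    Set.mem_univ_pi.2 fun i => by
      have := abs_le.1 (hc μ i); exact ⟨this.1, this.2⟩
  obtain ⟨t, htfin, htcov⟩ := Metric.totallyBounded_iff.1 hKc.totallyBounded (δ/16)
    (by linarith)
  set rep : (Fin n → ℝ) → Mplus E := fun y =>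
    if hy : ∃ μ : Mplus E, Vm g₀ h μ ∈ Metric.ball y (δ/16) then hy.choose
    else mu0 with hrep
  have key : ∀ (μ : Mplus E) (y : Fin n → ℝ), Vm g₀ h μ ∈ Metric.ball y (δ/16) →
      |φ μ - φ (rep y)| < 1 := by
    intro μ y hy
    have hex : ∃ ρ : Mplus E, Vm g₀ h ρ ∈ Metric.ball y (δ/16) := ⟨μ, hy⟩
    have hrepmem : Vm g₀ h (rep y) ∈ Metric.ball y (δ/16) := by
      simp only [hrep, dif_pos hex]
      exact hex.choose_spec
    refine H _ _ (HV _ _ fun i => ?_)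
    have hd : dist (Vm g₀ h μ) (Vm g₀ h (rep y)) < δ/8 := by
      calc dist (Vm g₀ h μ) (Vm g₀ h (rep y))
          ≤ dist (Vm g₀ h μ) y + dist (Vm g₀ h (rep y)) y := dist_triangle_right _ _ _
        _ < δ/16 + δ/16 := add_lt_add (Metric.mem_ball.1 hy) (Metric.mem_ball.1 hrepmem)
        _ = δ/8 := by ring
    have := (dist_le_pi_dist (Vm g₀ h μ) (Vm g₀ h (rep y)) i).trans_lt hd
    rwa [Real.dist_eq] at this
  have hcov : ∀ μ : Mplus E, ∃ y ∈ t, Vm g₀ h μ ∈ Metric.ball y (δ/16) := by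
    intro μ
    have := htcov (hmemK μ)
    simpa using this
  set t' : Finset (Fin n → ℝ) := htfin.toFinset with ht'
  obtain ⟨B₀, hB₀⟩ : ∃ B₀ : ℝ, ∀ q ∈ t' ×ˢ t', |φ (rep q.1) - φ (rep q.2)| ≤ B₀ := by
    obtain ⟨B₀, hB₀⟩ := Finset.exists_le
      ((t' ×ˢ t').image (fun q => |φ (rep q.1) - φ (rep q.2)|))
    exact ⟨B₀, fun q hq => hB₀ _ (Finset.mem_image_of_mem _ hq)⟩
  refine ⟨max B₀ 0 + 2, by positivity, ?_⟩
  intro μ ν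
  obtain ⟨yμ, hyμt, hyμ⟩ := hcov μ
  obtain ⟨yν, hyνt, hyν⟩ := hcov ν
  have h1 := key μ yμ hyμ
  have h2 := key ν yν hyν
  have h3 : |φ (rep yμ) - φ (rep yν)| ≤ B₀ :=
    hB₀ (yμ, yν) (Finset.mem_product.2 ⟨by simp [ht', hyμt], by simp [ht', hyνt]⟩)
  have h4 := abs_sub_le (φ μ) (φ (rep yμ)) (φ ν)
  have h5 := abs_sub_le (φ (rep yμ)) (φ (rep yν)) (φ ν)
  have h6 : |φ (rep yν) - φ ν| < 1 := by rwa [abs_sub_comm] at h2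
  have h7 : B₀ ≤ max B₀ 0 := le_max_left _ _
  linarith
end
section
open scoped Uniformity
variable {E : Type*} [TopologicalSpace E] [MeasurableSpace E] [BorelSpace E]
variable {N : ℕ∞} {g₀ : ℝ → ℝ} {g : ℕ → E → ℝ} {M : Set (E → ℝ)}

lemma dnn_dense {F : ∀ n : ℕ, Set ((Fin n → ℝ) → ℝ)}
    (hMenum : M = g '' {i : ℕ | 2 ≤ i ∧ (i : ℕ∞) ≤ N})
    (hg₀b : ∃ C, ∀ x ∈ Set.Ioi (0:ℝ), |g₀ x| ≤ C)
    (hMb : ∀ f ∈ M, ∃ C, ∀ x, |f x| ≤ C)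
    (hF : ∀ n, DenseOnCompacts (F n)) :
    UnifDense (DNN g₀ M F) (CU (SM (Wfun g₀ M))) := by
  classical
  intro φ hφ ε hε
  rw [uc_iff (g := g) hMenum] at hφ
  rcases isEmpty_or_nonempty (Mplus E) with hemp | hne
  · obtain ⟨f, hfF, -⟩ := (hF 1).2 ∅ isCompact_empty (fun _ => 0)
      (continuousOn_empty _) ε hε
    refine ⟨_, ⟨1, one_pos, f, fun _ => (fun _ => (0:ℝ)), hfF,
      fun i hi => absurd (Nat.lt_one_iff.1 i.2) hi, rfl⟩, fun μ => (hemp.false μ).elim⟩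
  · haveI := hne
    set mu0 : Mplus E := Classical.arbitrary _ with hmu0
    obtain ⟨δ₁, hδ₁, H₁⟩ := hφ 1 one_pos
    obtain ⟨B, hBnn, hB⟩ := bounded_of_uc (g₀ := g₀) mu0 hMenum hg₀b hMb φ ⟨δ₁, hδ₁, H₁⟩
    obtain ⟨δ, hδ, H⟩ := hφ (ε/4) (by linarith)
    obtain ⟨n, hn, h, hhM, HV⟩ := exists_V (g₀ := g₀) hMenum hδ
    obtain ⟨c, hc⟩ := Vm_bound hg₀b hMb hhM
    set K : Set (Fin n → ℝ) := Set.univ.pi (fun i => Set.Icc (-(c i)) (c i)) with hK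
    have hKc : IsCompact K := isCompact_univ_pi (fun i => isCompact_Icc)
    have hmemK : ∀ μ : Mplus E, Vm g₀ h μ ∈ K := fun μ =>
      Set.mem_univ_pi.2 fun i => by
        have := abs_le.1 (hc μ i); exact ⟨this.1, this.2⟩
    set L : ℝ := B/(δ/8) + 1 with hL
    have hLpos : 0 < L := by positivity
    set ψ : (Fin n → ℝ) → ℝ :=
      fun x => ⨅ μ : Mplus E, (φ μ + L * dist x (Vm g₀ h μ)) with hψ
    have hbdd : ∀ x : Fin n → ℝ,
        BddBelow (Set.range fun μ : Mplus E => φ μ + L * dist x (Vm g₀ h μ)) := by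
      intro x
      refine ⟨φ mu0 - B, ?_⟩
      rintro y ⟨μ, rfl⟩
      have h1 := (abs_le.1 (hB mu0 μ)).2
      have h2 : 0 ≤ L * dist x (Vm g₀ h μ) := mul_nonneg hLpos.le dist_nonneg
      show φ mu0 - B ≤ φ μ + L * dist x (Vm g₀ h μ)
      linarith
    have hψ_le : ∀ ν : Mplus E, ψ (Vm g₀ h ν) ≤ φ ν := by
      intro ν
      have h1 := ciInf_le (hbdd (Vm g₀ h ν)) ν
      simpa using h1
    have hψ_ge : ∀ ν : Mplus E, φ ν - ε/4 ≤ ψ (Vm g₀ h ν) := by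
      intro ν
      refine le_ciInf fun μ => ?_
      show φ ν - ε/4 ≤ φ μ + L * dist (Vm g₀ h ν) (Vm g₀ h μ)
      rcases lt_or_ge (dist (Vm g₀ h ν) (Vm g₀ h μ)) (δ/8) with hca | hca
      · have hco : ∀ i : Fin n, |Vm g₀ h μ i - Vm g₀ h ν i| < δ/8 := fun i => by
          have h2 := (dist_le_pi_dist (Vm g₀ h ν) (Vm g₀ h μ) i).trans_lt hca
          rw [Real.dist_eq, abs_sub_comm] at h2
          exact h2
        have h3 := abs_lt.1 (H μ ν (HV μ ν hco))
        have h4 : 0 ≤ L * dist (Vm g₀ h ν) (Vm g₀ h μ) := mul_nonneg hLpos.le dist_nonneg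
        have h5 : φ ν - ε/4 ≤ φ μ := by linarith [h3.1]
        calc φ ν - ε/4 ≤ φ μ := h5
          _ ≤ φ μ + L * dist (Vm g₀ h ν) (Vm g₀ h μ) := le_add_of_nonneg_right h4
      · have h2 := (abs_le.1 (hB ν μ)).2
        have h3 : L * (δ/8) ≤ L * dist (Vm g₀ h ν) (Vm g₀ h μ) :=
          mul_le_mul_of_nonneg_left hca hLpos.le
        have h4 : L * (δ/8) = B + δ/8 := by
          rw [hL]; field_simp
        linarith
    have hψ_lip : ∀ x y : Fin n → ℝ, ψ x ≤ ψ y + L * dist x y := by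
      intro x y
      have hkey : ψ x - L * dist x y ≤ ψ y := by
        refine le_ciInf fun μ => ?_
        show ψ x - L * dist x y ≤ φ μ + L * dist y (Vm g₀ h μ)
        have h1 : ψ x ≤ φ μ + L * dist x (Vm g₀ h μ) := ciInf_le (hbdd x) μ
        have h2 := mul_le_mul_of_nonneg_left (dist_triangle x y (Vm g₀ h μ)) hLpos.le
        rw [mul_add] at h2
        linarith
      linarith
    have hψ_cont : ContinuousOn ψ K := by
      have hlip : LipschitzWith (Real.toNNReal L) ψ := by
        refine LipschitzWith.of_dist_le_mul fun x y => ?_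
        rw [Real.dist_eq, Real.coe_toNNReal _ hLpos.le]
        have h1 := hψ_lip x y
        have h2 := hψ_lip y x
        rw [dist_comm y x] at h2
        exact abs_sub_le_iff.2 ⟨by linarith, by linarith⟩
      exact hlip.continuous.continuousOn
    obtain ⟨f, hfF, hfψ⟩ := (hF n).2 K hKc ψ hψ_cont (ε/4) (by linarith)
    refine ⟨_, ⟨n, hn, f, h, hfF, hhM, rfl⟩, fun μ => ?_⟩
    have hx := hfψ (Vm g₀ h μ) (hmemK μ)
    have h1 := hψ_le μ
    have h2 := hψ_ge μ
    have hgoal : |f (Vm g₀ h μ) - φ μ| < ε := by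
      have h3 := abs_lt.1 hx
      refine abs_lt.2 ⟨by linarith [h3.1], by linarith [h3.2]⟩
    exact hgoal
end
end S2

/-- Let `g₀ ∈ C_B((0,∞))` separate and strongly separate points on
`(0,∞)`, let `M = {g_i}_{i=2}^N ⊆ C_B(E)` be countable, separate and strongly
separate points and be closed under multiplication, and let each `F_n ⊆ C(ℝⁿ)` be
uniformly dense on the compacts of `ℝⁿ`.  Then `𝔇_{g₀}(M, {F_n})` is a uniformly
dense subset of `C_U(M⁺(E), 𝔖_{𝔚_{g₀}[M]})`, and `𝔖_{𝔚_{g₀}[M]}` is the metric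
uniformity of
`d(μ,ν) = (|g₀(μ(E)) − g₀(ν(E))| ∧ 1) + Σ_{i=2}^N 2^{−i} (|∫g_i dμ̄ − ∫g_i dν̄| ∧ 1)`. -/
theorem stmt2 {E : Type*} [TopologicalSpace E] [MeasurableSpace E] [BorelSpace E]
    (N : ℕ∞) (g₀ : ℝ → ℝ)
    (hg₀c : ContinuousOn g₀ (Set.Ioi 0)) (hg₀b : ∃ C, ∀ x ∈ Set.Ioi (0:ℝ), |g₀ x| ≤ C)
    (hg₀sep : SepPtsOn {g₀} (Set.Ioi 0)) (hg₀ssp : SSepPtsOn {g₀} (Set.Ioi 0))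
    (g : ℕ → E → ℝ) (M : Set (E → ℝ))
    (hMenum : M = g '' {i : ℕ | 2 ≤ i ∧ (i : ℕ∞) ≤ N})
    (hginj : Set.InjOn g {i : ℕ | 2 ≤ i ∧ (i : ℕ∞) ≤ N})
    (hMc : ∀ f ∈ M, Continuous f) (hMb : ∀ f ∈ M, ∃ C, ∀ x, |f x| ≤ C)
    (hsep : SepPts M) (hssp : SSepPts M)
    (hmul : ∀ f ∈ M, ∀ f' ∈ M, (fun x => f x * f' x) ∈ M)
    (F : ∀ n : ℕ, Set ((Fin n → ℝ) → ℝ)) (hF : ∀ n, DenseOnCompacts (F n)) :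
    (DNN g₀ M F ⊆ CU (SM (Wfun g₀ M)) ∧
      UnifDense (DNN g₀ M F) (CU (SM (Wfun g₀ M)))) ∧
    @uniformity (Mplus E) (SM (Wfun g₀ M)) =
      ⨅ (ε : ℝ) (_ : 0 < ε),
        Filter.principal {p : Mplus E × Mplus E |
          min |g₀ ((p.1.1 Set.univ).toReal) - g₀ ((p.2.1 Set.univ).toReal)| 1 +
            (∑' i : {i : ℕ // 2 ≤ i ∧ (i : ℕ∞) ≤ N},
              (2 : ℝ) ^ (-(i.1 : ℤ)) *
                min |(∫ x, g i.1 x ∂(nrm p.1)) - ∫ x, g i.1 x ∂(nrm p.2)| 1) < ε} := by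
  refine ⟨⟨S2.dnn_sub_cu hMenum hg₀b hMb hF, S2.dnn_dense hMenum hg₀b hMb hF⟩, ?_⟩
  exact S2.uniformity_eq hMenum
end

section
/- Let E be a topological space; let g₀ ∈ C_B((0,∞)) separate and strongly separate points on (0,∞); let M ⊆ C_B(E) be countable and separate and strongly separate points on E; and for each n ∈ ℕ let F_n, H_n ⊆ C(ℝⁿ) be uniformly dense on compacts of ℝⁿ. Then 𝔇_{g₀}( 𝔑(M,{F_n}), {H_n} ), i.e. the maps μ ↦ h( g₀(μ(E)), ∫_E φ₂ d(μ/μ(E)), …, ∫_E φ_n d(μ/μ(E)) ) with n ∈ ℕ, h ∈ H_n and φ₂,…,φ_n ∈ 𝔑(M,{F_n}), form a uniformly dense subset of C_U( M⁺(E), 𝔖_{𝔚_{g₀}[C_U(E,𝔖_M)]} ). -/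
open Set Filter Topology MeasureTheory

/-- The topological neural networks `𝔑(M, {F_n})`. -/
def NNet {X : Type*} (M : Set (X → ℝ)) (F : ∀ n : ℕ, Set ((Fin n → ℝ) → ℝ)) :
    Set (X → ℝ) :=
  { φ | ∃ n : ℕ, 0 < n ∧ ∃ (f : (Fin n → ℝ) → ℝ) (g : Fin n → X → ℝ),
      f ∈ F n ∧ (∀ i, g i ∈ M) ∧ φ = fun x => f fun i => g i x }

/-!
A function `Φ` that is uniformly continuous for `𝔖_W`, `W = 𝔚_{g₀}[C_U(E, 𝔖_M)]`, is determined
up to `ε` by finitely many functionals `G₁, …, G_k ∈ W` known up to some `δ`. Each `G_i` is either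
`μ ↦ g₀(μ(E))` or `μ ↦ ∫ φ d(μ/μ(E))` with `φ ∈ C_U(E, 𝔖_M)`; the same argument one level down
approximates `φ` uniformly by a network `ψ ∈ 𝔑(M, {F_n})`, so `G_i` is uniformly close to
`μ ↦ ∫ ψ d(μ/μ(E))`. Hence `Φ` has a modulus of continuity at one scale with respect to the bounded
feature map `T μ = (g₀(μ(E)), ∫ ψ₁ d(μ/μ(E)), …)`. Averaging values of `Φ` with a partition of
unity subordinate to the balls around the points `T μ` gives a continuous `f` with `f ∘ T ≈ Φ`, and
`H_n` approximates `f` on the compact closure of the range of `T`. When `M = ∅`, every function in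
`C_U(E, 𝔖_M)` is constant, and `g₀(μ(E))` alone suffices.
-/

open Bornology Metric
open scoped Uniformity

section Approximation

variable {Y : Type*}

lemma isBounded_range_iff_exists_abs_le {f : Y → ℝ} :
    IsBounded (range f) ↔ ∃ C, ∀ x, |f x| ≤ C := by
  simp [isBounded_iff_forall_norm_le, Real.norm_eq_abs]

lemma isBounded_range_pi {ι : Type*} {g : ι → Y → ℝ} (hg : ∀ i, IsBounded (range (g i))) :
    IsBounded (range fun x i => g i x) :=
  forall_isBounded_image_eval_iff.1 fun i => by rw [← range_comp]; exact hg i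

lemma UniformContinuous.comp_of_isBounded_range [UniformSpace Y] {Z Z' : Type*}
    [PseudoMetricSpace Z] [ProperSpace Z] [UniformSpace Z'] {q : Y → Z}
    (hq : UniformContinuous q) (hb : IsBounded (range q)) {f : Z → Z'} (hf : Continuous f) :
    UniformContinuous (f ∘ q) :=
  (uniformContinuousOn_iff_restrict.1
    (hb.isCompact_closure.uniformContinuousOn_of_continuous hf.continuousOn)).comp
    (hq.subtype_mk fun x => subset_closure (mem_range_self x))

lemma exists_continuous_comp_approx {k : ℕ} {q : Y → Fin k → ℝ} {φ : Y → ℝ} {δ η : ℝ}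
    (hδ : 0 < δ) (hmod : ∀ x y, (∀ j, |q x j - q y j| < δ) → |φ x - φ y| < η) :
    ∃ f : (Fin k → ℝ) → ℝ, Continuous f ∧ ∀ x, |f (q x) - φ x| ≤ η := by
  have hcover : closure (range q) ⊆ ⋃ y, ball (q y) δ := fun u hu => by
    obtain ⟨_, ⟨y, rfl⟩, hy⟩ := Metric.mem_closure_iff.1 hu δ hδ
    exact mem_iUnion.2 ⟨y, mem_ball.2 hy⟩
  obtain ⟨ρ, hρ⟩ := PartitionOfUnity.exists_isSubordinate isClosed_closure _
    (fun _ => isOpen_ball) hcover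
  refine ⟨fun u => ∑ᶠ y, ρ y u • φ y,
    hρ.continuous_finsum_smul (fun _ => isOpen_ball) fun _ => continuousOn_const, fun x => ?_⟩
  have hclose : ∀ y, ρ y (q x) ≠ 0 → φ y ∈ closedBall (φ x) η := fun y hy => by
    have hxy : dist (q x) (q y) < δ := hρ y (subset_closure hy)
    rw [mem_closedBall, Real.dist_eq, abs_sub_comm]
    exact (hmod x y fun j => by
      simpa [Real.dist_eq] using (dist_pi_lt_iff hδ).1 hxy j).le
  simpa [Real.dist_eq] using ρ.finsum_smul_mem_convex (g := fun y _ => φ y)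
    (subset_closure (mem_range_self x)) hclose (convex_closedBall (φ x) η)

lemma DenseOnCompacts.exists_comp_approx {k : ℕ} {H : Set ((Fin k → ℝ) → ℝ)}
    (hH : DenseOnCompacts H) {q : Y → Fin k → ℝ} (hq : IsBounded (range q)) {φ : Y → ℝ}
    {δ ε : ℝ} (hδ : 0 < δ) (hε : 0 < ε)
    (hmod : ∀ x y, (∀ j, |q x j - q y j| < δ) → |φ x - φ y| < ε / 2) :
    ∃ h ∈ H, ∀ x, |h (q x) - φ x| < ε := by
  obtain ⟨f, hf, hfφ⟩ := exists_continuous_comp_approx hδ hmod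
  obtain ⟨h, hH, hhf⟩ := hH.2 _ hq.isCompact_closure f hf.continuousOn (ε / 2) (half_pos hε)
  refine ⟨h, hH, fun x => ?_⟩
  have := hhf (q x) (subset_closure (mem_range_self x))
  calc |h (q x) - φ x| ≤ |h (q x) - f (q x)| + |f (q x) - φ x| := abs_sub_le _ _ _
    _ < ε / 2 + ε / 2 := add_lt_add_of_lt_of_le this (hfφ x)
    _ = ε := add_halves ε

end Approximation

section SM

variable {Y : Type*} {D : Set (Y → ℝ)}

lemma uniformity_SM :
    𝓤[SM D] = ⨅ g : D, comap (fun xy : Y × Y => ((g : Y → ℝ) xy.1, (g : Y → ℝ) xy.2)) (𝓤 ℝ) := by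
  change comap _ (𝓤 (D → ℝ)) = _
  simp only [Pi.uniformity, comap_iInf, comap_comap]
  rfl

lemma exists_modulus_of_mem_CU_SM {φ : Y → ℝ} (hφ : φ ∈ CU (SM D)) {ε : ℝ} (hε : 0 < ε) :
    ∃ (k : ℕ) (g : Fin k → Y → ℝ), (∀ i, g i ∈ D) ∧
      ∃ δ > 0, ∀ x y, (∀ i, |g i x - g i y| < δ) → |φ x - φ y| < ε := by
  have hbasis := HasBasis.iInf' fun g : D => (Metric.uniformity_basis_dist (α := ℝ)).comap
    fun xy : Y × Y => ((g : Y → ℝ) xy.1, (g : Y → ℝ) xy.2)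
  rw [← uniformity_SM] at hbasis
  obtain ⟨⟨I, r⟩, ⟨hI, hr⟩, hsub⟩ := (hbasis.tendsto_iff Metric.uniformity_basis_dist).1 hφ ε hε
  -- a common radius below the finitely many radii `r g`
  obtain ⟨δ, hδr, hδ⟩ := ((((eventually_all_finite hI).2 fun g hg =>
    eventually_lt_nhds (hr g hg)).filter_mono nhdsWithin_le_nhds).and
    self_mem_nhdsWithin).exists (f := 𝓝[>] (0 : ℝ))
  obtain ⟨k, e, he⟩ := hI.fin_embedding
  refine ⟨k, fun i => e i, fun i => (e i).2, δ, hδ, fun x y hxy => ?_⟩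
  simpa [Real.dist_eq] using @hsub (x, y) (mem_iInter₂.2 fun g hg => by
    obtain ⟨i, rfl⟩ := he ▸ hg
    simpa [Real.dist_eq] using (hxy i).trans (hδr _ hg))

lemma uniformContinuous_SM_of_mem {g : Y → ℝ} (hg : g ∈ D) :
    UniformContinuous[SM D, _] g := by
  have hev : UniformContinuous[SM D, _] fun y (g : D) => (g : Y → ℝ) y := uniformContinuous_comap
  exact @UniformContinuous.comp Y (D → ℝ) ℝ (SM D) _ _ _ _
    (Pi.uniformContinuous_proj _ ⟨g, hg⟩) hev

lemma continuous_of_mem_CU_SM [TopologicalSpace Y] (hD : ∀ g ∈ D, Continuous g) {φ : Y → ℝ}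
    (hφ : φ ∈ CU (SM D)) : Continuous φ :=
  continuous_le_dom (continuous_iff_le_induced.1 (continuous_pi fun g : D => hD g g.2))
    (@UniformContinuous.continuous _ _ (SM D) _ _ hφ)

lemma eq_of_mem_CU_SM_empty {φ : Y → ℝ} (hφ : φ ∈ CU (SM (∅ : Set (Y → ℝ)))) (x y : Y) :
    φ x = φ y :=
  eq_of_forall_dist_le fun ε hε => by
    obtain ⟨k, g, hg, δ, -, hmod⟩ := exists_modulus_of_mem_CU_SM hφ hε
    rw [Real.dist_eq]
    exact (hmod x y fun i => absurd (hg i) (notMem_empty _)).le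

end SM

section NNet

variable {X : Type*} {M : Set (X → ℝ)} {F : ∀ n : ℕ, Set ((Fin n → ℝ) → ℝ)}

lemma continuous_of_mem_NNet [TopologicalSpace X] (hM : ∀ g ∈ M, Continuous g)
    (hF : ∀ n, ∀ f ∈ F n, Continuous f) {φ : X → ℝ} (hφ : φ ∈ NNet M F) : Continuous φ := by
  obtain ⟨n, -, f, g, hf, hg, rfl⟩ := hφ
  exact (hF n f hf).comp (continuous_pi fun i => hM _ (hg i))

lemma isBounded_range_of_mem_NNet (hM : ∀ g ∈ M, IsBounded (range g))
    (hF : ∀ n, ∀ f ∈ F n, Continuous f) {φ : X → ℝ} (hφ : φ ∈ NNet M F) :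
    IsBounded (range φ) := by
  obtain ⟨n, -, f, g, hf, hg, rfl⟩ := hφ
  have hq := isBounded_range_pi fun i => hM _ (hg i)
  exact ((hq.isCompact_closure.image (hF n f hf)).isBounded).subset
    fun _ ⟨x, hx⟩ => ⟨_, subset_closure (mem_range_self x), hx⟩

lemma mem_CU_SM_of_mem_NNet (hM : ∀ g ∈ M, IsBounded (range g))
    (hF : ∀ n, ∀ f ∈ F n, Continuous f) {φ : X → ℝ} (hφ : φ ∈ NNet M F) : φ ∈ CU (SM M) := by
  obtain ⟨n, -, f, g, hf, hg, rfl⟩ := hφ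
  have hq : UniformContinuous[SM M, _] fun x i => g i x :=
    @uniformContinuous_pi _ _ _ _ (SM M) _ |>.2 fun i => uniformContinuous_SM_of_mem (hg i)
  exact @UniformContinuous.comp_of_isBounded_range X (SM M) _ _ _ _ _ _ hq
    (isBounded_range_pi fun i => hM _ (hg i)) f (hF n f hf)

lemma exists_mem_NNet_abs_sub_lt (hMne : M.Nonempty) (hM : ∀ g ∈ M, IsBounded (range g))
    (hF : ∀ n, DenseOnCompacts (F n)) {φ : X → ℝ} (hφ : φ ∈ CU (SM M)) {ε : ℝ} (hε : 0 < ε) :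
    ∃ ψ ∈ NNet M F, ∀ x, |ψ x - φ x| < ε := by
  obtain ⟨k, g, hgM, δ, hδ, hmod⟩ := exists_modulus_of_mem_CU_SM hφ (half_pos hε)
  -- prepend an element of `M` so that the network has at least one input
  set g' : Fin (k + 1) → X → ℝ := Fin.cons hMne.some g
  have hg'M : ∀ i, g' i ∈ M := Fin.cases hMne.some_mem hgM
  obtain ⟨f, hf, hfφ⟩ := (hF (k + 1)).exists_comp_approx (q := fun x i => g' i x)
    (isBounded_range_pi fun i => hM _ (hg'M i)) hδ hε
    fun x y hxy => hmod x y fun i => by simpa [g'] using hxy i.succ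
  exact ⟨_, ⟨k + 1, k.succ_pos, f, g', hf, hg'M, rfl⟩, hfφ⟩

end NNet

section Measures

variable {E : Type*} [MeasurableSpace E] {g₀ : ℝ → ℝ}

instance (μ : Mplus E) : IsProbabilityMeasure (nrm μ) := by
  have := μ.2.1
  constructor
  rw [nrm, Measure.smul_apply, smul_eq_mul]
  exact ENNReal.inv_mul_cancel (Measure.measure_univ_ne_zero.2 μ.2.2) (measure_ne_top _ _)

lemma Mplus.toReal_measure_univ_pos (μ : Mplus E) : 0 < (μ.1 univ).toReal := by
  have := μ.2.1
  exact ENNReal.toReal_pos (Measure.measure_univ_ne_zero.2 μ.2.2) (measure_ne_top _ _)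

lemma abs_integral_nrm_le (μ : Mplus E) {g : E → ℝ} {C : ℝ} (hC : ∀ x, |g x| ≤ C) :
    |∫ x, g x ∂(nrm μ)| ≤ C := by
  simpa using norm_integral_le_of_norm_le_const (μ := nrm μ) (f := g) (C := C)
    (Eventually.of_forall hC)

lemma integral_nrm_eq_of_forall_eq {φ : E → ℝ} (hφ : ∀ x y, φ x = φ y) (μ ν : Mplus E) :
    ∫ x, φ x ∂(nrm μ) = ∫ x, φ x ∂(nrm ν) := by
  obtain ⟨x₀⟩ := nonempty_of_isProbabilityMeasure (nrm μ)
  rw [show φ = fun _ => φ x₀ from funext fun x => hφ x x₀]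
  simp

lemma exists_mem_NNet_abs_integral_sub_le [TopologicalSpace E] [OpensMeasurableSpace E]
    {M : Set (E → ℝ)} {F : ∀ n : ℕ, Set ((Fin n → ℝ) → ℝ)} (hMne : M.Nonempty)
    (hMc : ∀ g ∈ M, Continuous g) (hMb : ∀ g ∈ M, IsBounded (range g))
    (hF : ∀ n, DenseOnCompacts (F n)) {φ : E → ℝ} (hφ : φ ∈ CU (SM M)) {η : ℝ} (hη : 0 < η) :
    ∃ ψ ∈ NNet M F, ∀ μ : Mplus E, |∫ x, ψ x ∂(nrm μ) - ∫ x, φ x ∂(nrm μ)| ≤ η := by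
  obtain ⟨ψ, hψ, hψφ⟩ := exists_mem_NNet_abs_sub_lt hMne hMb hF hφ hη
  obtain ⟨C, hC⟩ := isBounded_range_iff_exists_abs_le.1
    (isBounded_range_of_mem_NNet hMb (fun n => (hF n).1) hψ)
  have hint : ∀ (μ : Mplus E) {g : E → ℝ}, Continuous g → (∀ x, |g x| ≤ C + η) →
      Integrable g (nrm μ) := fun μ g hg hgC =>
    Integrable.of_bound hg.aestronglyMeasurable _ (ae_of_all _ hgC)
  refine ⟨ψ, hψ, fun μ => ?_⟩
  rw [← integral_sub
    (hint μ (continuous_of_mem_NNet hMc (fun n => (hF n).1) hψ) fun x => by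
      linarith [hC x])
    (hint μ (continuous_of_mem_CU_SM hMc hφ) fun x => by
      linarith [hC x, abs_sub_abs_le_abs_sub (φ x) (ψ x), abs_sub_comm (ψ x) (φ x), hψφ x])]
  exact abs_integral_nrm_le μ fun x => (hψφ x).le

/-- The inputs of the networks in `DNN g₀ D H`; the function `h 0` is never used. -/
noncomputable def dnnFeatures {n : ℕ} (g₀ : ℝ → ℝ) (h : Fin n → E → ℝ) (μ : Mplus E) :
    Fin n → ℝ :=
  fun i => if i.1 = 0 then g₀ ((μ.1 univ).toReal) else ∫ x, h i x ∂(nrm μ)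

lemma dnnFeatures_zero {k : ℕ} (h : Fin (k + 1) → E → ℝ) (μ : Mplus E) :
    dnnFeatures g₀ h μ 0 = g₀ ((μ.1 univ).toReal) :=
  if_pos rfl

lemma dnnFeatures_succ {k : ℕ} (h : Fin (k + 1) → E → ℝ) (μ : Mplus E) (i : Fin k) :
    dnnFeatures g₀ h μ i.succ = ∫ x, h i.succ x ∂(nrm μ) :=
  if_neg (Nat.succ_ne_zero i)

lemma isBounded_range_dnnFeatures (hg₀ : IsBounded (g₀ '' Ioi 0)) {n : ℕ}
    {h : Fin n → E → ℝ} (hh : ∀ i : Fin n, i.1 ≠ 0 → IsBounded (range (h i))) :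
    IsBounded (range (dnnFeatures g₀ h)) := by
  refine isBounded_range_pi (g := fun i μ => dnnFeatures g₀ h μ i) fun i => ?_
  by_cases hi : i.1 = 0
  · refine hg₀.subset ?_
    rintro _ ⟨μ, rfl⟩
    simp only [dnnFeatures, if_pos hi]
    exact mem_image_of_mem _ μ.toReal_measure_univ_pos
  · obtain ⟨C, hC⟩ := isBounded_range_iff_exists_abs_le.1 (hh i hi)
    refine isBounded_range_iff_exists_abs_le.2 ⟨C, fun μ => ?_⟩
    simp only [dnnFeatures, if_neg hi]
    exact abs_integral_nrm_le μ hC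

end Measures

section Features

variable {E : Type*} [TopologicalSpace E] [MeasurableSpace E] {g₀ : ℝ → ℝ}

lemma dnnFeatures_apply_mem_Wfun {D : Set (E → ℝ)} {n : ℕ} {h : Fin n → E → ℝ}
    (hh : ∀ i : Fin n, i.1 ≠ 0 → h i ∈ D) (i : Fin n) :
    (fun μ => dnnFeatures g₀ h μ i) ∈ Wfun g₀ D := by
  by_cases hi : i.1 = 0
  · exact Or.inr (by simp only [dnnFeatures, if_pos hi])
  · exact Or.inl ⟨h i, hh i hi, by simp only [dnnFeatures, if_neg hi]⟩

lemma DNN_subset_CU_SM_Wfun (hg₀ : IsBounded (g₀ '' Ioi 0)) {D D' : Set (E → ℝ)}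
    (hDD' : D ⊆ D') (hD : ∀ φ ∈ D, IsBounded (range φ)) {H : ∀ n : ℕ, Set ((Fin n → ℝ) → ℝ)}
    (hH : ∀ n, ∀ f ∈ H n, Continuous f) : DNN g₀ D H ⊆ CU (SM (Wfun g₀ D')) := by
  rintro _ ⟨n, -, f, h, hf, hh, rfl⟩
  have hT : UniformContinuous[SM (Wfun g₀ D'), _] (dnnFeatures g₀ h) :=
    @uniformContinuous_pi _ _ _ _ (SM _) _ |>.2 fun i =>
      uniformContinuous_SM_of_mem (dnnFeatures_apply_mem_Wfun (fun i hi => hDD' (hh i hi)) i)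
  exact @UniformContinuous.comp_of_isBounded_range _ (SM _) _ _ _ _ _ _ hT
    (isBounded_range_dnnFeatures hg₀ fun i hi => hD _ (hh i hi)) f (hH n f hf)

lemma exists_mem_DNN_abs_sub_lt (hg₀ : IsBounded (g₀ '' Ioi 0)) {D : Set (E → ℝ)}
    (hD : ∀ φ ∈ D, IsBounded (range φ)) {H : ∀ n : ℕ, Set ((Fin n → ℝ) → ℝ)}
    (hH : ∀ n, DenseOnCompacts (H n)) {n : ℕ} (hn : 0 < n) {h : Fin n → E → ℝ}
    (hh : ∀ i : Fin n, i.1 ≠ 0 → h i ∈ D) {Φ : Mplus E → ℝ} {δ ε : ℝ} (hδ : 0 < δ)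
    (hε : 0 < ε)
    (hmod : ∀ μ ν, (∀ j, |dnnFeatures g₀ h μ j - dnnFeatures g₀ h ν j| < δ) →
      |Φ μ - Φ ν| < ε / 2) :
    ∃ Ψ ∈ DNN g₀ D H, ∀ μ, |Ψ μ - Φ μ| < ε := by
  obtain ⟨f, hf, hfΦ⟩ := (hH n).exists_comp_approx
    (isBounded_range_dnnFeatures hg₀ fun i hi => hD _ (hh i hi)) hδ hε hmod
  exact ⟨_, ⟨n, hn, f, h, hf, hh, rfl⟩, hfΦ⟩

end Features

section Modulus

variable {E : Type*} [TopologicalSpace E] [MeasurableSpace E] [OpensMeasurableSpace E]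
  {g₀ : ℝ → ℝ} {M : Set (E → ℝ)} {F : ∀ n : ℕ, Set ((Fin n → ℝ) → ℝ)}

lemma exists_dnnFeatures_modulus_of_nonempty (hMne : M.Nonempty)
    (hMc : ∀ g ∈ M, Continuous g) (hMb : ∀ g ∈ M, IsBounded (range g))
    (hF : ∀ n, DenseOnCompacts (F n)) {k : ℕ} {G : Fin k → Mplus E → ℝ}
    (hG : ∀ i, G i ∈ Wfun g₀ (CU (SM M))) {δ : ℝ} (hδ : 0 < δ) :
    ∃ h : Fin (k + 1) → E → ℝ, (∀ i : Fin (k + 1), i.1 ≠ 0 → h i ∈ NNet M F) ∧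
      ∀ μ ν, (∀ j, |dnnFeatures g₀ h μ j - dnnFeatures g₀ h ν j| < δ / 3) →
        ∀ i, |G i μ - G i ν| < δ := by
  have hψ : ∀ i, ∃ ψ ∈ NNet M F, (G i = fun μ => g₀ ((μ.1 univ).toReal)) ∨
      ∀ μ, |∫ x, ψ x ∂(nrm μ) - G i μ| ≤ δ / 3 := by
    intro i
    rcases hG i with ⟨φ, hφ, hGi⟩ | hGi
    · obtain ⟨ψ, hψ, hψφ⟩ := exists_mem_NNet_abs_integral_sub_le (F := F) hMne hMc hMb hF hφ
        (by positivity : 0 < δ / 3)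
      exact ⟨ψ, hψ, Or.inr fun μ => hGi ▸ hψφ μ⟩
    · -- any network will do here
      obtain ⟨ψ, hψ, -⟩ := exists_mem_NNet_abs_sub_lt (F := F) hMne hMb hF
        (show (fun _ => 0) ∈ CU (SM M) from @uniformContinuous_const _ _ (SM M) _ 0) one_pos
      exact ⟨ψ, hψ, Or.inl hGi⟩
  choose ψ hψ hGψ using hψ
  refine ⟨Fin.cons 0 ψ, Fin.cases (absurd rfl) fun i _ => hψ i, fun μ ν hμν i => ?_⟩
  rcases hGψ i with hGi | hGi
  · have := hμν 0
    rw [dnnFeatures_zero, dnnFeatures_zero] at this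
    rw [hGi]
    linarith
  · have := hμν i.succ
    rw [dnnFeatures_succ, dnnFeatures_succ, Fin.cons_succ] at this
    have hμ := abs_le.1 (hGi μ)
    have hν := abs_le.1 (hGi ν)
    have hψμν := abs_lt.1 this
    rw [abs_lt]
    constructor <;> linarith

lemma exists_dnnFeatures_modulus (hMc : ∀ g ∈ M, Continuous g)
    (hMb : ∀ g ∈ M, IsBounded (range g)) (hF : ∀ n, DenseOnCompacts (F n)) {k : ℕ}
    {G : Fin k → Mplus E → ℝ} (hG : ∀ i, G i ∈ Wfun g₀ (CU (SM M))) {δ : ℝ} (hδ : 0 < δ) :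
    ∃ n, 0 < n ∧ ∃ h : Fin n → E → ℝ, (∀ i : Fin n, i.1 ≠ 0 → h i ∈ NNet M F) ∧
      ∃ δ' > 0, ∀ μ ν, (∀ j, |dnnFeatures g₀ h μ j - dnnFeatures g₀ h ν j| < δ') →
        ∀ i, |G i μ - G i ν| < δ := by
  rcases M.eq_empty_or_nonempty with rfl | hMne
  · refine ⟨1, one_pos, 0, fun i hi => absurd (Fin.val_eq_zero i) hi, δ, hδ,
      fun μ ν hμν i => ?_⟩
    rcases hG i with ⟨φ, hφ, hGi⟩ | hGi
    · simpa only [hGi, integral_nrm_eq_of_forall_eq (eq_of_mem_CU_SM_empty hφ) μ ν, sub_self,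
        abs_zero] using hδ
    · simpa [hGi, dnnFeatures_zero] using hμν 0
  · obtain ⟨h, hh, hmod⟩ := exists_dnnFeatures_modulus_of_nonempty hMne hMc hMb hF hG hδ
    exact ⟨k + 1, k.succ_pos, h, hh, δ / 3, by positivity, hmod⟩

end Modulus

theorem stmt3_general {E : Type*} [TopologicalSpace E] [MeasurableSpace E] [BorelSpace E]
    (g₀ : ℝ → ℝ)
    (hg₀b : ∃ C, ∀ x ∈ Set.Ioi (0:ℝ), |g₀ x| ≤ C)
    (M : Set (E → ℝ))
    (hMc : ∀ f ∈ M, Continuous f) (hMb : ∀ f ∈ M, ∃ C, ∀ x, |f x| ≤ C)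
    (F H : ∀ n : ℕ, Set ((Fin n → ℝ) → ℝ))
    (hF : ∀ n, DenseOnCompacts (F n)) (hH : ∀ n, DenseOnCompacts (H n)) :
    DNN g₀ (NNet M F) H ⊆ CU (SM (Wfun g₀ (CU (SM M)))) ∧
      UnifDense (DNN g₀ (NNet M F) H) (CU (SM (Wfun g₀ (CU (SM M))))) := by
  have hMb' : ∀ g ∈ M, IsBounded (range g) := fun g hg =>
    isBounded_range_iff_exists_abs_le.2 (hMb g hg)
  have hg₀b' : IsBounded (g₀ '' Ioi 0) := by
    obtain ⟨C, hC⟩ := hg₀b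
    exact isBounded_iff_forall_norm_le.2 ⟨C, by rintro _ ⟨x, hx, rfl⟩; exact hC x hx⟩
  have hNNet : ∀ ψ ∈ NNet M F, IsBounded (range ψ) := fun ψ =>
    isBounded_range_of_mem_NNet hMb' fun n => (hF n).1
  refine ⟨DNN_subset_CU_SM_Wfun hg₀b' (fun ψ => mem_CU_SM_of_mem_NNet hMb' fun n => (hF n).1)
    hNNet fun n => (hH n).1, fun Φ hΦ ε hε => ?_⟩
  obtain ⟨k, G, hGW, δ, hδ, hΦG⟩ := exists_modulus_of_mem_CU_SM hΦ (half_pos hε)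
  obtain ⟨n, hn, h, hh, δ', hδ', hGT⟩ := exists_dnnFeatures_modulus hMc hMb' hF hGW hδ
  exact exists_mem_DNN_abs_sub_lt hg₀b' hNNet hH hn hh hδ' hε fun μ ν hμν =>
    hΦG μ ν (hGT μ ν hμν)

/-- Let `g₀ ∈ C_B((0,∞))` separate and strongly separate points on
`(0,∞)`; let `M ⊆ C_B(E)` be countable and separate and strongly separate points
on `E`; and let `F_n, H_n ⊆ C(ℝⁿ)` be uniformly dense on the compacts of `ℝⁿ`.
Then `𝔇_{g₀}(𝔑(M, {F_n}), {H_n})` is a uniformly dense subset of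
`C_U(M⁺(E), 𝔖_{𝔚_{g₀}[C_U(E, 𝔖_M)]})`. -/
theorem stmt3 {E : Type*} [TopologicalSpace E] [MeasurableSpace E] [BorelSpace E]
    (g₀ : ℝ → ℝ)
    (hg₀c : ContinuousOn g₀ (Set.Ioi 0)) (hg₀b : ∃ C, ∀ x ∈ Set.Ioi (0:ℝ), |g₀ x| ≤ C)
    (hg₀sep : SepPtsOn {g₀} (Set.Ioi 0)) (hg₀ssp : SSepPtsOn {g₀} (Set.Ioi 0))
    (M : Set (E → ℝ)) (hMcount : M.Countable)
    (hMc : ∀ f ∈ M, Continuous f) (hMb : ∀ f ∈ M, ∃ C, ∀ x, |f x| ≤ C)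
    (hsep : SepPts M) (hssp : SSepPts M)
    (F H : ∀ n : ℕ, Set ((Fin n → ℝ) → ℝ))
    (hF : ∀ n, DenseOnCompacts (F n)) (hH : ∀ n, DenseOnCompacts (H n)) :
    DNN g₀ (NNet M F) H ⊆ CU (SM (Wfun g₀ (CU (SM M)))) ∧
      UnifDense (DNN g₀ (NNet M F) H) (CU (SM (Wfun g₀ (CU (SM M))))) :=
  stmt3_general g₀ hg₀b M hMc hMb F H hF hH
end

section
/- Let (X,T) be a topological space and M ⊆ ℝ^X a family of real-valued functions on X. Then M strongly separates points on (X,T) if and only if T is contained in the initial topology O_M(X) on X induced by M (the coarsest topology on X making every g ∈ M continuous into ℝ with its standard topology). -/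
open Set Filter Topology

/-!
In the initial topology of `M`, the point `x` has a neighbourhood basis of sets
`{y | ∀ i, dist (g i y) (g i x) < ε}` with finitely many `g i ∈ M`: a finite intersection of
subbasic neighbourhoods, shrunk to a common radius. Strong separation at `(x, O)` says exactly
that one of these sets lies in `O`, i.e. that `O` is a neighbourhood of `x` in the initial
topology.
-/

theorem exists_pos_forall_lt_of_finite {ι : Type*} [Finite ι] {δ : ι → ℝ} (hδ : ∀ i, 0 < δ i) :
    ∃ ε > 0, ∀ i, ε < δ i :=
  (eventually_mem_nhdsWithin.and
    (eventually_all.2 fun i => nhdsWithin_le_nhds (eventually_lt_nhds (hδ i)))).exists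
    (f := 𝓝[>] (0 : ℝ))

section InitialTopology

variable {X Y : Type*} [PseudoMetricSpace Y] {M : Set (X → Y)}

theorem exists_fin_family_of_mem_nhds_iInf_induced {x : X} {O : Set X}
    (hO : O ∈ @nhds X (⨅ g : M, TopologicalSpace.induced (g : X → Y) inferInstance) x) :
    ∃ (k : ℕ) (g : Fin k → X → Y), (∀ i, g i ∈ M) ∧
      ∃ ε > 0, ∀ y, (∀ i, dist (g i y) (g i x) < ε) → y ∈ O := by
  simp only [nhds_iInf, nhds_induced] at hO
  obtain ⟨I, hI, V, hV, rfl⟩ := mem_iInf.1 hO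
  choose δ hδ hδV using fun i => (Metric.nhds_basis_ball.comap _).mem_iff.1 (hV i)
  have := hI.to_subtype
  obtain ⟨ε, hε, hεδ⟩ := exists_pos_forall_lt_of_finite hδ
  obtain ⟨k, e, -, he⟩ := hI.fin_param
  refine ⟨k, fun j => e j, fun j => (e j).2, ε, hε, fun y hy => mem_iInter.2 fun i => ?_⟩
  obtain ⟨j, hj⟩ : (i : M) ∈ range e := he ▸ i.2
  exact hδV i (hj ▸ (hy j).trans (hεδ i))

theorem mem_nhds_iInf_induced_iff {x : X} {O : Set X} :
    O ∈ @nhds X (⨅ g : M, TopologicalSpace.induced (g : X → Y) inferInstance) x ↔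
      ∃ (k : ℕ) (g : Fin k → X → Y), (∀ i, g i ∈ M) ∧
        ∃ ε > 0, ∀ y, (∀ i, dist (g i y) (g i x) < ε) → y ∈ O := by
  refine ⟨exists_fin_family_of_mem_nhds_iInf_induced, ?_⟩
  rintro ⟨k, g, hg, ε, hε, hO⟩
  let _ : TopologicalSpace X := ⨅ g : M, TopologicalSpace.induced (g : X → Y) inferInstance
  have hcont (i : Fin k) : Continuous (g i) :=
    continuous_iInf_dom (i := ⟨g i, hg i⟩) continuous_induced_dom
  refine mem_of_superset (iInter_mem.2 fun i => (hcont i).continuousAt.preimage_mem_nhds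
    (Metric.ball_mem_nhds (g i x) hε)) fun y hy => hO y fun i => ?_
  exact mem_iInter.1 hy i

end InitialTopology

theorem ssepPts_iff_forall_isOpen_mem_nhds_iInf_induced {X : Type*} [TopologicalSpace X]
    (M : Set (X → ℝ)) :
    SSepPts M ↔ ∀ (x : X) (O : Set X), IsOpen O → x ∈ O →
      O ∈ @nhds X (⨅ g : M, TopologicalSpace.induced (g : X → ℝ) inferInstance) x := by
  simp only [SSepPts, mem_nhds_iInf_induced_iff, Real.dist_eq, ← not_le, ← not_exists,
    not_imp_comm (a := _ ∈ _)]

/-- `M` strongly separates points on `(X, T)` iff `T` is contained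
in the initial topology `O_M(X)` induced by `M` (i.e. `O_M(X)` is finer than `T`). -/
theorem stmt7 {X : Type*} [t : TopologicalSpace X] (M : Set (X → ℝ)) :
    SSepPts M ↔
      (⨅ g : M, TopologicalSpace.induced (g : X → ℝ) inferInstance) ≤ t := by
  rw [ssepPts_iff_forall_isOpen_mem_nhds_iInf_induced, le_iff_nhds]
  refine forall_congr' fun x => ?_
  rw [(@nhds_basis_opens X t x).ge_iff]
  simp only [and_imp]
  exact forall_congr' fun O => forall_comm
end

section
/- Let X be a Hausdorff topological space and M ⊆ C(X) a family of real-valued continuous functions on X. Then the following are equivalent: (1) the evaluation map ⨂M : X → ⨂M(X) ⊆ ℝ^M is a homeomorphism onto its image; (2) M strongly separates points on X; (3) M determines point convergence on X (for every net (x_λ) and p ∈ X, if g(x_λ) → g(p) for every g ∈ M then x_λ → p). Each of (1)–(3) implies (4): M determines sequential point convergence on X (the same implication for sequences). If M is countable, then (1)–(4) are all equivalent. -/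
/-! Write `e = ⨂M`. Each of (1)–(3) says that the filter `comap e (𝓝 (e p))` — the
neighbourhood filter of `p` for the topology induced by `M` — is finer than `𝓝 p`; continuity
of `M` gives the reverse inequality. Basic neighbourhoods of `e p` in `ℝ^M` may be taken to
be finite-dimensional cubes of a common radius, which is where the finitely many `gᵢ` and
the single `ε` of strong separation come from. When `M` is countable this filter is countably
generated, so sequences detect it. -/

open Set Filter Topology

/-- `M` determines point convergence on `X` (expressed via filters, equivalently
nets): if `g(x_λ) → g(p)` for every `g ∈ M` then `x_λ → p`. -/
def DeterminesPtConv {X : Type*} [TopologicalSpace X] (M : Set (X → ℝ)) : Prop :=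
  ∀ (F : Filter X) (p : X), (∀ g ∈ M, Filter.Tendsto g F (𝓝 (g p))) → F ≤ 𝓝 p

/-- `M` determines sequential point convergence on `X`. -/
def DeterminesSeqConv {X : Type*} [TopologicalSpace X] (M : Set (X → ℝ)) : Prop :=
  ∀ (x : ℕ → X) (p : X),
    (∀ g ∈ M, Filter.Tendsto (fun n => g (x n)) Filter.atTop (𝓝 (g p))) →
    Filter.Tendsto x Filter.atTop (𝓝 p)

theorem nhds_basis_pi_ball {ι : Type*} {E : ι → Type*} [∀ i, PseudoMetricSpace (E i)]
    (a : ∀ i, E i) :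
    (𝓝 a).HasBasis (fun Iε : Set ι × ℝ => Iε.1.Finite ∧ 0 < Iε.2)
      (fun Iε => Iε.1.pi fun i => Metric.ball (a i) Iε.2) := by
  rw [nhds_pi]
  refine hasBasis_pi_same_index (fun i => Metric.nhds_basis_ball) fun I r hI hr => ?_
  have hsmall : ∀ᶠ ε in 𝓝[>] (0 : ℝ), 0 < ε ∧ ∀ i ∈ I, ε ≤ r i :=
    eventually_mem_nhdsWithin.and <| (eventually_all_finite hI).2 fun i hi =>
      (eventually_le_nhds (hr i hi)).filter_mono nhdsWithin_le_nhds
  obtain ⟨ε, hε, hεr⟩ := hsmall.exists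
  exact ⟨ε, hε, fun i hi => Metric.ball_subset_ball (hεr i hi)⟩

section

variable {X : Type*} {M : Set (X → ℝ)}

variable (M) in
def evalMap (x : X) : M → ℝ := fun g => (g : X → ℝ) x

theorem tendsto_evalMap_iff {α : Type*} {F : Filter α} {f : α → X} {p : X} :
    Tendsto (evalMap M ∘ f) F (𝓝 (evalMap M p)) ↔ ∀ g ∈ M, Tendsto (g ∘ f) F (𝓝 (g p)) := by
  rw [tendsto_pi_nhds, Subtype.forall]
  rfl

variable [TopologicalSpace X]

theorem ssepPts_iff_comap_nhds_le :
    SSepPts M ↔ ∀ p, comap (evalMap M) (𝓝 (evalMap M p)) ≤ 𝓝 p := by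
  simp only [SSepPts, ((nhds_basis_pi_ball _).comap _).le_basis_iff (nhds_basis_opens _)]
  refine forall_congr' fun p => ⟨fun h O ⟨hpO, hO⟩ => ?_, fun h O hO hpO => ?_⟩
  · obtain ⟨k, g, hgM, ε, hε, hsep⟩ := h O hO hpO
    refine ⟨⟨range fun i => ⟨g i, hgM i⟩, ε⟩, ⟨finite_range _, hε⟩, fun y hy => ?_⟩
    by_contra hyO
    obtain ⟨i, hi⟩ := hsep y hyO
    exact (hy _ ⟨i, rfl⟩).not_ge hi
  · obtain ⟨⟨I, ε⟩, ⟨hI, hε⟩, hsub⟩ := h O ⟨hpO, hO⟩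
    obtain ⟨k, g, -, rfl⟩ := hI.fin_param
    refine ⟨k, fun i => g i, fun i => (g i).2, ε, hε, fun y hyO => ?_⟩
    by_contra! hclose
    exact hyO <| hsub fun _ ⟨i, hi⟩ => hi ▸ hclose i

theorem determinesPtConv_iff_comap_nhds_le :
    DeterminesPtConv M ↔ ∀ p, comap (evalMap M) (𝓝 (evalMap M p)) ≤ 𝓝 p := by
  have hcoord : ∀ F p, (∀ g ∈ M, Tendsto g F (𝓝 (g p))) ↔
      F ≤ comap (evalMap M) (𝓝 (evalMap M p)) := fun F p =>
    (tendsto_evalMap_iff (f := id)).symm.trans tendsto_iff_comap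
  simp only [DeterminesPtConv, hcoord]
  exact ⟨fun h p => h _ p le_rfl, fun h F p hF => hF.trans (h p)⟩

theorem isEmbedding_evalMap_iff_comap_nhds_le [T0Space X] (hMc : ∀ g ∈ M, Continuous g) :
    IsEmbedding (evalMap M) ↔ ∀ p, comap (evalMap M) (𝓝 (evalMap M p)) ≤ 𝓝 p := by
  have hcont : Continuous (evalMap M) := continuous_pi fun g => hMc g g.2
  rw [isEmbedding_iff_isInducing, isInducing_iff_nhds]
  exact forall_congr' fun p => ⟨fun h => h.ge, (hcont.tendsto p).le_comap.antisymm⟩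

theorem DeterminesPtConv.determinesSeqConv (h : DeterminesPtConv M) : DeterminesSeqConv M :=
  fun x p hx => h (map x atTop) p fun g hg => tendsto_map'_iff.2 (hx g hg)

theorem DeterminesSeqConv.comap_nhds_le (hM : M.Countable) (h : DeterminesSeqConv M) (p : X) :
    comap (evalMap M) (𝓝 (evalMap M p)) ≤ 𝓝 p := by
  have : Countable M := hM.to_subtype
  rw [← tendsto_id', tendsto_iff_seq_tendsto]
  intro x hx
  exact h x p (tendsto_evalMap_iff.1 (tendsto_comap_iff.1 hx))

end

/-- For a Hausdorff space `X` and `M ⊆ C(X)`: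
(1) the evaluation map `⨂M` is a homeomorphism onto its image (an embedding),
(2) `M` strongly separates points, and (3) `M` determines point convergence,
are all equivalent, and each implies (4) `M` determines sequential point
convergence; if `M` is countable, (4) is equivalent to them as well. -/
theorem stmt10 {X : Type*} [TopologicalSpace X] [T2Space X]
    (M : Set (X → ℝ)) (hMc : ∀ g ∈ M, Continuous g) :
    (IsEmbedding (fun x (g : M) => (g : X → ℝ) x) ↔ SSepPts M) ∧
    (SSepPts M ↔ DeterminesPtConv M) ∧
    (DeterminesPtConv M → DeterminesSeqConv M) ∧
    (M.Countable →
      (DeterminesSeqConv M → IsEmbedding (fun x (g : M) => (g : X → ℝ) x))) := by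
  have hemb := isEmbedding_evalMap_iff_comap_nhds_le hMc
  have hsep := ssepPts_iff_comap_nhds_le (M := M)
  have hconv := determinesPtConv_iff_comap_nhds_le (M := M)
  exact ⟨hemb.trans hsep.symm, hsep.trans hconv.symm, DeterminesPtConv.determinesSeqConv,
    fun hM hseq => hemb.2 (hseq.comap_nhds_le hM)⟩
end

section
/- Let X be a compact topological space and M ⊆ C(X) a family of real-valued continuous functions. Then X is Hausdorff and M strongly separates points on X if and only if M separates points on X. -/
open Set Filter Topology

/-- For a compact space `X` and `M ⊆ C(X)`:
`X` is Hausdorff and `M` strongly separates points iff `M` separates points. -/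
theorem stmt11 {X : Type*} [TopologicalSpace X] [CompactSpace X]
    (M : Set (X → ℝ)) (hMc : ∀ g ∈ M, Continuous g) :
    (T2Space X ∧ SSepPts M) ↔ SepPts M := by
  constructor
  · rintro ⟨hT2, hS⟩ x y hxy
    obtain ⟨k, g, hg, ε, hε, h⟩ := hS x {y}ᶜ isOpen_compl_singleton
      (by simp [hxy])
    obtain ⟨i, hi⟩ := h y (by simp)
    exact ⟨g i, hg i, fun he => by simp [he] at hi; linarith⟩
  · intro hSep
    have hT2 : T2Space X := by
      constructor
      intro x y hxy
      obtain ⟨g, hg, hne⟩ := hSep x y hxy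
      exact separated_by_continuous (hMc g hg) hne
    refine ⟨hT2, fun x O hO hxO => ?_⟩
    have hK : IsCompact (Oᶜ) := hO.isClosed_compl.isCompact
    by_cases hne : (Oᶜ : Set X).Nonempty
    · choose g hgM hgne using fun y : (Oᶜ : Set X) => hSep (y : X) x
        (fun h => y.2 (h ▸ hxO))
      set c : (Oᶜ : Set X) → ℝ := fun y => |g y (y : X) - g y x| with hc
      have hcpos : ∀ y, 0 < c y := fun y => abs_sub_pos.mpr (hgne y)
      set U : (Oᶜ : Set X) → Set X := fun y => {z | c y / 2 < |g y z - g y x|} with hU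
      have hUo : ∀ y, IsOpen (U y) := fun y =>
        isOpen_lt continuous_const (((hMc _ (hgM y)).sub continuous_const).abs)
      have hcov : Oᶜ ⊆ ⋃ y, U y := fun z hz =>
        mem_iUnion.mpr ⟨⟨z, hz⟩, by simpa [hU, hc] using half_lt_self (hcpos ⟨z, hz⟩)⟩
      obtain ⟨t, ht⟩ := hK.elim_finite_subcover U hUo hcov
      have htne : t.Nonempty := by
        obtain ⟨z, hz⟩ := hne
        obtain ⟨y, hyt, -⟩ := Set.mem_iUnion₂.mp (ht hz)
        exact ⟨y, hyt⟩
      refine ⟨t.card, fun i => g (t.equivFin.symm i), fun i => hgM _,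
        t.inf' htne (fun y => c y / 2), ?_, ?_⟩
      · exact (Finset.lt_inf'_iff htne).mpr fun y _ => half_pos (hcpos y)
      · intro z hz
        obtain ⟨y, hyt, hyU⟩ := Set.mem_iUnion₂.mp (ht hz)
        refine ⟨t.equivFin ⟨y, hyt⟩, ?_⟩
        simp only [Equiv.symm_apply_apply]
        exact le_trans (Finset.inf'_le _ hyt) (le_of_lt hyU)
    · exact ⟨0, Fin.elim0, fun i => i.elim0, 1, one_pos,
        fun z hz => absurd hz (fun h => hne ⟨z, h⟩)⟩
end

section
/- Let E be a topological space; let g₀ ∈ C_B((0,∞)) separate and strongly separate points on (0,∞); and let M = {1} ∪ {g_i}_{i=2}^N ⊆ C_B(E) (N ∈ ℕ ∪ {∞}) be countable, separate points, strongly separate points, and be closed under multiplication. Let 𝔚_{g₀}[M] = { μ ↦ ∫_E g d(μ/μ(E)) : g ∈ M, g ≠ 1 } ∪ { μ ↦ g₀(μ(E)) } on M⁺(E), the nonzero finite Borel measures on E with the weak topology. Then: (1) M⁺(E) is metrizable; (2) 𝔚_{g₀}[M] consists of bounded continuous real-valued functions on M⁺(E); (3) 𝔚_{g₀}[M] determines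 sequential point convergence on M⁺(E) (if every functional in 𝔚_{g₀}[M] converges along a sequence (μ_n) to its value at μ, then μ_n ⇒ μ); (4) 𝔚_{g₀}[M] separates and strongly separates points on M⁺(E); and (5) the evaluation map μ ↦ (F(μ))_{F ∈ 𝔚_{g₀}[M]} is a homeomorphism of M⁺(E) onto its image in ℝ^{𝔚_{g₀}[M]}. -/
open Set Filter Topology MeasureTheory

/-- The functionals `𝔚_{g₀}[M]` on `M⁺(E)`:
`{ μ ↦ ∫ g d(μ/μ(E)) : g ∈ M, g ≠ 1 } ∪ { μ ↦ g₀(μ(E)) }`. -/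
noncomputable def Wfun' {E : Type*} [TopologicalSpace E] [MeasurableSpace E]
    (g₀ : ℝ → ℝ) (D : Set (E → ℝ)) : Set (Mplus E → ℝ) :=
  { F | (∃ g ∈ D, g ≠ (fun _ => (1 : ℝ)) ∧ F = fun μ => ∫ x, g x ∂(nrm μ)) ∨
        F = fun μ => g₀ ((μ.1 Set.univ).toReal) }

/-! The functionals in `𝔚_{g₀}[M]` record the total mass `μ(E)` through `g₀` and the integrals
of `M` against `μ / μ(E)`; as `g₀` strongly separates points of `(0, ∞)`, convergence of
`g₀(μₙ(E))` forces convergence of the masses. Since `M` is countable, bounded and strongly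
separating, `x ↦ (g x)_{g ∈ M}` embeds `E` into a compact metrizable cube `K`, where `M` becomes a
point-separating multiplicative family of continuous functions. On `K` every family of probability
measures is tight, so convergence of the integrals of the algebra generated by `M` gives weak
convergence of the push-forwards, and this pulls back to `E` by the portmanteau theorem because
every open set of `E` is the preimage of an open set of `K`. Thus `𝔚_{g₀}[M]` determines
sequential convergence; being countable and continuous, its evaluation map is an embedding into a
countable power of `ℝ`, and metrizability and strong separation follow from that. -/
open scoped BoundedContinuousFunction

section StrongSeparation

variable {X : Type*} {D : Set (X → ℝ)}

lemma sepPts_of_injective_eval (h : Function.Injective (fun x (f : D) => f.1 x)) : SepPts D := by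
  intro x y hxy
  by_contra! hD
  exact hxy (h (funext fun f => hD f f.2))

variable [TopologicalSpace X]

lemma SSepPtsOn.tendsto {A : Set X} (h : SSepPtsOn D A) {ι : Type*} {l : Filter ι}
    {u : ι → X} {x : X} (hx : x ∈ A) (hu : ∀ᶠ i in l, u i ∈ A)
    (hD : ∀ f ∈ D, Tendsto (fun i => f (u i)) l (𝓝 (f x))) : Tendsto u l (𝓝 x) := by
  refine (nhds_basis_opens x).tendsto_right_iff.mpr fun O ⟨hxO, hO⟩ => ?_
  obtain ⟨k, f, hfD, ε, hε, hfar⟩ := h x hx O hO hxO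
  have hnear : ∀ᶠ i in l, ∀ j, |f j (u i) - f j x| < ε := eventually_all.mpr fun j =>
    (Metric.tendsto_nhds.mp (hD _ (hfD j)) ε hε).mono fun i hi => by rwa [Real.dist_eq] at hi
  filter_upwards [hu, hnear] with i hiA hi
  by_contra hiO
  obtain ⟨j, hj⟩ := hfar (u i) ⟨hiA, hiO⟩
  exact (hj.trans_lt (hi j)).false

lemma SSepPts.ssepPtsOn_univ (h : SSepPts D) : SSepPtsOn D univ := by
  intro x _ O hO hxO
  obtain ⟨k, f, hfD, ε, hε, hfar⟩ := h x O hO hxO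
  exact ⟨k, f, hfD, ε, hε, fun y hy => hfar y hy.2⟩

lemma isInducing_eval_of_tendsto_comap (hcont : ∀ f ∈ D, Continuous f)
    (h : ∀ x, Tendsto id (comap (fun y (f : D) => f.1 y) (𝓝 (fun f : D => f.1 x))) (𝓝 x)) :
    IsInducing (fun x (f : D) => f.1 x) :=
  isInducing_iff_nhds.mpr fun x =>
    le_antisymm ((continuous_pi fun f : D => hcont f f.2).tendsto x).le_comap (tendsto_id'.mp (h x))

lemma SSepPts.isInducing_eval (hcont : ∀ f ∈ D, Continuous f) (h : SSepPts D) :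
    IsInducing (fun x (f : D) => f.1 x) :=
  isInducing_eval_of_tendsto_comap hcont fun x =>
    h.ssepPtsOn_univ.tendsto (l := comap _ _) (u := id) (mem_univ x)
      (univ_mem' fun _ => mem_univ _) fun f hf =>
        tendsto_pi_nhds.mp (tendsto_comap (f := fun y (g : D) => g.1 y)) ⟨f, hf⟩

lemma isInducing_eval_of_seq_tendsto (hD : D.Countable) (hcont : ∀ f ∈ D, Continuous f)
    (hseq : ∀ (u : ℕ → X) (x : X),
      (∀ f ∈ D, Tendsto (fun n => f (u n)) atTop (𝓝 (f x))) → Tendsto u atTop (𝓝 x)) :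
    IsInducing (fun x (f : D) => f.1 x) := by
  have : Countable D := hD.to_subtype
  refine isInducing_eval_of_tendsto_comap hcont fun x => tendsto_of_seq_tendsto fun u hu => ?_
  exact hseq u x fun f hf => tendsto_pi_nhds.mp (tendsto_comap_iff.mp hu) ⟨f, hf⟩

lemma ssepPts_of_isInducing_eval (h : IsInducing (fun x (f : D) => f.1 x)) : SSepPts D := by
  intro x O hO hxO
  have hOx : O ∈ comap (fun y (f : D) => f.1 y) (pi fun f : D => 𝓝 (f.1 x)) := by
    rw [← nhds_pi, ← h.nhds_eq_comap]; exact hO.mem_nhds hxO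
  obtain ⟨⟨I, δ⟩, ⟨hI, hδ⟩, hIO⟩ :=
    ((hasBasis_pi fun f : D => Metric.nhds_basis_ball (x := f.1 x)).comap _).mem_iff.mp hOx
  obtain ⟨k, f, -, rfl⟩ := hI.fin_param
  have hsmall : ∀ᶠ ε in 𝓝[>] (0 : ℝ), ∀ j, ε ≤ δ (f j) := eventually_all.mpr fun j =>
    eventually_nhdsWithin_of_eventually_nhds (eventually_le_nhds (hδ _ ⟨j, rfl⟩))
  obtain ⟨ε, hεδ, hε⟩ := (hsmall.and self_mem_nhdsWithin).exists
  refine ⟨k, fun j => (f j).1, fun j => (f j).2, ε, hε, fun y hyO => ?_⟩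
  by_contra! hnear
  refine hyO (hIO ?_)
  rintro _ ⟨j, rfl⟩
  rw [Metric.mem_ball, Real.dist_eq]
  exact (hnear j).trans_le (hεδ j)

end StrongSeparation

namespace Mplus

section Mass

variable {E : Type*} [MeasurableSpace E]

noncomputable def mass (μ : Mplus E) : ℝ := (μ.1 univ).toReal

lemma mass_pos (μ : Mplus E) : 0 < mass μ := by
  have := μ.2.1
  exact ENNReal.toReal_pos (Measure.measure_univ_ne_zero.mpr μ.2.2) (measure_ne_top _ _)

instance (μ : Mplus E) : IsProbabilityMeasure (nrm μ) := by
  have := μ.2.1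
  constructor
  rw [nrm, Measure.smul_apply, smul_eq_mul, ENNReal.inv_mul_cancel
    (Measure.measure_univ_ne_zero.mpr μ.2.2) (measure_ne_top _ _)]

noncomputable def toProbabilityMeasure (μ : Mplus E) : ProbabilityMeasure E :=
  ⟨nrm μ, inferInstance⟩

lemma integral_nrm (μ : Mplus E) (f : E → ℝ) :
    ∫ x, f x ∂(nrm μ) = (mass μ)⁻¹ * ∫ x, f x ∂μ.1 := by
  rw [nrm, integral_smul_measure, ENNReal.toReal_inv, smul_eq_mul, mass]

lemma integral_eq_mass_mul (μ : Mplus E) (f : E → ℝ) :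
    ∫ x, f x ∂μ.1 = mass μ * ∫ x, f x ∂(nrm μ) := by
  rw [integral_nrm, mul_inv_cancel_left₀ (mass_pos μ).ne']

end Mass

variable {E : Type*} [TopologicalSpace E] [MeasurableSpace E]

lemma nhds_eq (μ : Mplus E) : 𝓝 μ = ⨅ f : E →ᵇ ℝ,
    comap (fun ν : Mplus E => ∫ x, f x ∂ν.1) (𝓝 (∫ x, f x ∂μ.1)) := by
  rw [show MplusTop E = ⨅ f : E →ᵇ ℝ,
    TopologicalSpace.induced (fun ν : Mplus E => ∫ x, f x ∂ν.1) inferInstance from rfl, nhds_iInf]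
  exact iInf_congr fun f => nhds_induced _ _

lemma tendsto_nhds_iff {ι : Type*} {l : Filter ι} {μs : ι → Mplus E} {μ : Mplus E} :
    Tendsto μs l (𝓝 μ) ↔
      ∀ f : E →ᵇ ℝ, Tendsto (fun i => ∫ x, f x ∂(μs i).1) l (𝓝 (∫ x, f x ∂μ.1)) := by
  rw [nhds_eq, tendsto_iInf]
  exact forall_congr' fun f => tendsto_comap_iff

lemma continuous_integral (f : E →ᵇ ℝ) : Continuous fun ν : Mplus E => ∫ x, f x ∂ν.1 :=
  continuous_iff_continuousAt.mpr fun _ => tendsto_nhds_iff.mp tendsto_id f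

lemma continuous_mass : Continuous (mass (E := E)) := by
  show Continuous fun ν : Mplus E => (ν.1 univ).toReal
  simpa [integral_const, measureReal_def] using
    continuous_integral (BoundedContinuousFunction.const E (1 : ℝ))

lemma continuous_integral_nrm (f : E →ᵇ ℝ) :
    Continuous fun ν : Mplus E => ∫ x, f x ∂(nrm ν) := by
  simp only [integral_nrm]
  exact (continuous_mass.inv₀ fun ν => (mass_pos ν).ne').mul (continuous_integral f)

lemma tendsto_of_tendsto_mass_of_tendsto_toProbabilityMeasure [OpensMeasurableSpace E]
    {ι : Type*} {l : Filter ι} {μs : ι → Mplus E} {μ : Mplus E}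
    (hmass : Tendsto (fun i => mass (μs i)) l (𝓝 (mass μ)))
    (hnrm : Tendsto (fun i => toProbabilityMeasure (μs i)) l (𝓝 (toProbabilityMeasure μ))) :
    Tendsto μs l (𝓝 μ) := by
  refine tendsto_nhds_iff.mpr fun f => ?_
  simp only [integral_eq_mass_mul]
  exact hmass.mul (ProbabilityMeasure.tendsto_iff_forall_integral_tendsto.mp hnrm f)

end Mplus

namespace MeasureTheory.ProbabilityMeasure

lemma tendsto_of_tendsto_map_of_isInducing {E K ι : Type*} [TopologicalSpace E]
    [MeasurableSpace E] [OpensMeasurableSpace E] [TopologicalSpace K] [MeasurableSpace K]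
    [BorelSpace K] [HasOuterApproxClosed K] {e : E → K} (he : IsInducing e)
    {l : Filter ι} [l.IsCountablyGenerated] {P : ι → ProbabilityMeasure E}
    {P₀ : ProbabilityMeasure E}
    (h : Tendsto (fun i => (P i).map he.continuous.aemeasurable) l
      (𝓝 (P₀.map he.continuous.aemeasurable))) :
    Tendsto P l (𝓝 P₀) := by
  refine tendsto_of_forall_isOpen_le_liminf' fun G hG => ?_
  obtain ⟨V, hV, rfl⟩ := he.isOpen_iff.mp hG
  simpa [toMeasure_map, Measure.map_apply he.continuous.measurable hV.measurableSet] using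
    le_liminf_measure_open_of_tendsto h hV

lemma tendsto_of_compactSpace_of_separatesPoints {K ι : Type*} [TopologicalSpace K] [CompactSpace K]
    [PolishSpace K] [MeasurableSpace K] [BorelSpace K] {l : Filter ι}
    {Q : ι → ProbabilityMeasure K} {Q₀ : ProbabilityMeasure K} (T : Submonoid (K →ᵇ ℝ))
    (hT : ∀ u v, u ≠ v → ∃ f ∈ T, f u ≠ f v)
    (hQ : ∀ f ∈ T, Tendsto (fun i => ∫ u, f u ∂(Q i)) l (𝓝 (∫ u, f u ∂Q₀))) :
    Tendsto Q l (𝓝 Q₀) := by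
  have hstar : star (T : Set (K →ᵇ ℝ)) ⊆ T := fun f hf => by
    rwa [show f = star f by ext; simp]
  refine tendsto_of_tight_of_separatesPoints ℝ (.of_compactSpace) (A := StarAlgebra.adjoin ℝ T)
    (fun u v huv => ?_) fun a ha => ?_
  · obtain ⟨f, hf, hfuv⟩ := hT u v huv
    exact ⟨f, ⟨_, ⟨f, StarAlgebra.subset_adjoin ℝ _ hf, rfl⟩, rfl⟩, hfuv⟩
  · replace ha :
        a ∈ Subalgebra.toSubmodule (StarAlgebra.adjoin ℝ (T : Set (K →ᵇ ℝ))).toSubalgebra := ha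
    rw [StarAlgebra.adjoin_eq_span, union_eq_self_of_subset_right hstar, Submonoid.closure_eq] at ha
    induction ha using Submodule.span_induction with
    | mem f hf => exact hQ f hf
    | zero => simpa using tendsto_const_nhds
    | add f g _ _ hf hg =>
      simpa [integral_add (f.integrable _) (g.integrable _)] using hf.add hg
    | smul c f _ hf => simpa [integral_const_mul] using hf.const_mul c

lemma tendsto_of_ssepPts {E ι : Type*} [TopologicalSpace E]
    [MeasurableSpace E] [BorelSpace E] {M : Set (E → ℝ)} (hone : (fun _ => (1 : ℝ)) ∈ M)
    (hMcount : M.Countable) (hMc : ∀ g ∈ M, Continuous g) (hMb : ∀ g ∈ M, ∃ C, ∀ x, |g x| ≤ C)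
    (hssp : SSepPts M) (hmul : ∀ g ∈ M, ∀ g' ∈ M, (fun x => g x * g' x) ∈ M)
    {l : Filter ι} [l.IsCountablyGenerated] {P : ι → ProbabilityMeasure E}
    {P₀ : ProbabilityMeasure E}
    (h : ∀ g ∈ M, Tendsto (fun i => ∫ x, g x ∂(P i)) l (𝓝 (∫ x, g x ∂P₀))) :
    Tendsto P l (𝓝 P₀) := by
  have : Countable M := hMcount.to_subtype
  choose C hC using fun g : M => hMb g g.2
  let K := ∀ g : M, Icc (-C g) (C g)
  let e : E → K := fun x g => ⟨g.1 x, abs_le.mp (hC g x)⟩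
  have he : IsInducing e := (hssp.isInducing_eval hMc).of_comp
    (_root_.continuous_pi fun g => (hMc g g.2).subtype_mk _)
    (_root_.continuous_pi fun g => (continuous_apply g).subtype_val)
  let T : Submonoid (K →ᵇ ℝ) :=
    { carrier := {f | ∃ g ∈ M, ∀ x, f (e x) = g x}
      one_mem' := ⟨_, hone, fun _ => rfl⟩
      mul_mem' := fun ⟨g, hg, hfg⟩ ⟨g', hg', hfg'⟩ =>
        ⟨_, hmul g hg g' hg', fun x => by simp [hfg x, hfg' x]⟩ }
  refine tendsto_of_tendsto_map_of_isInducing he (tendsto_of_compactSpace_of_separatesPoints T ?_ ?_)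
  · intro u v huv
    obtain ⟨g, hg⟩ := Function.ne_iff.mp huv
    exact ⟨.mkOfCompact ⟨fun u => u g, by fun_prop⟩, ⟨g, g.2, fun _ => rfl⟩,
      fun h => hg (Subtype.ext h)⟩
  · rintro f ⟨g, hg, hfg⟩
    simpa [toMeasure_map, integral_map he.continuous.aemeasurable
      f.continuous.aestronglyMeasurable, hfg] using h g hg

end MeasureTheory.ProbabilityMeasure

section Wfun

variable {E : Type*} [TopologicalSpace E] [MeasurableSpace E] {g₀ : ℝ → ℝ} {M : Set (E → ℝ)}

lemma wfun_countable (hM : M.Countable) : (Wfun' g₀ M).Countable := by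
  refine ((hM.image fun g (ν : Mplus E) => ∫ x, g x ∂(nrm ν)).insert
    fun ν => g₀ (Mplus.mass ν)).mono ?_
  rintro F (⟨g, hg, -, rfl⟩ | rfl)
  · exact mem_insert_of_mem _ ⟨g, hg, rfl⟩
  · exact mem_insert _ _

lemma continuous_of_mem_wfun (hg₀c : ContinuousOn g₀ (Ioi 0)) (hMc : ∀ g ∈ M, Continuous g)
    (hMb : ∀ g ∈ M, ∃ C, ∀ x, |g x| ≤ C) {F : Mplus E → ℝ} (hF : F ∈ Wfun' g₀ M) :
    Continuous F := by
  rcases hF with ⟨g, hg, -, rfl⟩ | rfl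
  · obtain ⟨C, hC⟩ := hMb g hg
    exact Mplus.continuous_integral_nrm
      (.ofNormedAddCommGroup g (hMc g hg) C fun x => (Real.norm_eq_abs _).trans_le (hC x))
  · exact hg₀c.comp_continuous Mplus.continuous_mass Mplus.mass_pos

lemma bounded_of_mem_wfun (hg₀b : ∃ C, ∀ x ∈ Ioi (0 : ℝ), |g₀ x| ≤ C)
    (hMb : ∀ g ∈ M, ∃ C, ∀ x, |g x| ≤ C) {F : Mplus E → ℝ} (hF : F ∈ Wfun' g₀ M) :
    ∃ C, ∀ μ, |F μ| ≤ C := by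
  rcases hF with ⟨g, hg, -, rfl⟩ | rfl
  · obtain ⟨C, hC⟩ := hMb g hg
    refine ⟨C, fun μ => ?_⟩
    simpa using norm_integral_le_of_norm_le_const (μ := nrm μ) (f := g) (.of_forall hC)
  · obtain ⟨C, hC⟩ := hg₀b
    exact ⟨C, fun μ => hC _ (Mplus.mass_pos μ)⟩

variable [BorelSpace E]

lemma tendsto_of_forall_wfun_tendsto (hg₀ssp : SSepPtsOn {g₀} (Ioi 0))
    (hone : (fun _ => (1 : ℝ)) ∈ M) (hMcount : M.Countable) (hMc : ∀ g ∈ M, Continuous g)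
    (hMb : ∀ g ∈ M, ∃ C, ∀ x, |g x| ≤ C) (hssp : SSepPts M)
    (hmul : ∀ g ∈ M, ∀ g' ∈ M, (fun x => g x * g' x) ∈ M)
    {ι : Type*} {l : Filter ι} [l.IsCountablyGenerated] {μs : ι → Mplus E} {μ : Mplus E}
    (h : ∀ F ∈ Wfun' g₀ M, Tendsto (fun i => F (μs i)) l (𝓝 (F μ))) :
    Tendsto μs l (𝓝 μ) := by
  have hmass : Tendsto (fun i => Mplus.mass (μs i)) l (𝓝 (Mplus.mass μ)) :=
    hg₀ssp.tendsto (Mplus.mass_pos μ) (.of_forall fun i => Mplus.mass_pos (μs i))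
      fun _ hf => hf ▸ h _ (Or.inr rfl)
  refine Mplus.tendsto_of_tendsto_mass_of_tendsto_toProbabilityMeasure hmass
    (ProbabilityMeasure.tendsto_of_ssepPts hone hMcount hMc hMb hssp hmul fun g hg => ?_)
  by_cases hg1 : g = fun _ => 1
  · subst hg1
    simpa using tendsto_const_nhds
  · exact h _ (Or.inl ⟨g, hg, hg1, rfl⟩)

lemma injective_eval_wfun (hg₀ssp : SSepPtsOn {g₀} (Ioi 0))
    (hone : (fun _ => (1 : ℝ)) ∈ M) (hMcount : M.Countable) (hMc : ∀ g ∈ M, Continuous g)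
    (hMb : ∀ g ∈ M, ∃ C, ∀ x, |g x| ≤ C) (hssp : SSepPts M)
    (hmul : ∀ g ∈ M, ∀ g' ∈ M, (fun x => g x * g' x) ∈ M) :
    Function.Injective fun (μ : Mplus E) (F : Wfun' g₀ M) => F.1 μ := by
  intro ν μ heval
  have : Countable M := hMcount.to_subtype
  have := (hssp.isInducing_eval hMc).pseudoMetrizableSpace
  have := ν.2.1
  have := μ.2.1
  have hνμ : Tendsto (fun _ : ℕ => ν) atTop (𝓝 μ) :=
    tendsto_of_forall_wfun_tendsto hg₀ssp hone hMcount hMc hMb hssp hmul fun F hF =>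
      tendsto_const_nhds.congr fun _ => (congrFun heval ⟨F, hF⟩).symm
  exact Subtype.ext <| ext_of_forall_integral_eq_of_IsFiniteMeasure fun f =>
    tendsto_nhds_unique tendsto_const_nhds (((Mplus.continuous_integral f).tendsto μ).comp hνμ)

end Wfun

theorem stmt19_general {E : Type*} [TopologicalSpace E] [MeasurableSpace E] [BorelSpace E]
    (g₀ : ℝ → ℝ)
    (hg₀c : ContinuousOn g₀ (Set.Ioi 0)) (hg₀b : ∃ C, ∀ x ∈ Set.Ioi (0:ℝ), |g₀ x| ≤ C)
    (hg₀ssp : SSepPtsOn {g₀} (Set.Ioi 0))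
    (M : Set (E → ℝ)) (hone : (fun _ => (1 : ℝ)) ∈ M) (hMcount : M.Countable)
    (hMc : ∀ f ∈ M, Continuous f) (hMb : ∀ f ∈ M, ∃ C, ∀ x, |f x| ≤ C)
    (hssp : SSepPts M)
    (hmul : ∀ f ∈ M, ∀ f' ∈ M, (fun x => f x * f' x) ∈ M) :
    TopologicalSpace.MetrizableSpace (Mplus E) ∧
    (∀ F ∈ Wfun' g₀ M, Continuous F ∧ ∃ C, ∀ μ : Mplus E, |F μ| ≤ C) ∧
    (∀ (μs : ℕ → Mplus E) (μ : Mplus E),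
      (∀ F ∈ Wfun' g₀ M,
        Filter.Tendsto (fun n => F (μs n)) Filter.atTop (𝓝 (F μ))) →
      Filter.Tendsto μs Filter.atTop (𝓝 μ)) ∧
    (SepPts (Wfun' g₀ M) ∧ SSepPts (Wfun' g₀ M)) ∧
    IsEmbedding (fun (μ : Mplus E) (F : Wfun' g₀ M) => (F : Mplus E → ℝ) μ) := by
  have hcont : ∀ F ∈ Wfun' g₀ M, Continuous F := fun F =>
    continuous_of_mem_wfun hg₀c hMc hMb
  have hdet : ∀ (μs : ℕ → Mplus E) (μ : Mplus E),
      (∀ F ∈ Wfun' g₀ M, Tendsto (fun n => F (μs n)) atTop (𝓝 (F μ))) →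
      Tendsto μs atTop (𝓝 μ) := fun _ _ =>
    tendsto_of_forall_wfun_tendsto hg₀ssp hone hMcount hMc hMb hssp hmul
  have hemb : IsEmbedding fun (μ : Mplus E) (F : Wfun' g₀ M) => F.1 μ :=
    ⟨isInducing_eval_of_seq_tendsto (wfun_countable hMcount) hcont hdet,
      injective_eval_wfun hg₀ssp hone hMcount hMc hMb hssp hmul⟩
  have : Countable (Wfun' g₀ M) := (wfun_countable hMcount).to_subtype
  exact ⟨hemb.metrizableSpace, fun F hF => ⟨hcont F hF, bounded_of_mem_wfun hg₀b hMb hF⟩, hdet,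
    ⟨sepPts_of_injective_eval hemb.injective, ssepPts_of_isInducing_eval hemb.isInducing⟩, hemb⟩

/-- Let `g₀ ∈ C_B((0,∞))` separate and strongly separate points on
`(0,∞)`, and let `M = {1} ∪ {g_i} ⊆ C_B(E)` be countable, separate and strongly
separate points, and be closed under multiplication.  Then (1) `M⁺(E)` is
metrizable; (2) `𝔚_{g₀}[M] ⊆ C_B(M⁺(E))`; (3) `𝔚_{g₀}[M]` determines sequential
point convergence on `M⁺(E)`; (4) `𝔚_{g₀}[M]` separates and strongly separates
points on `M⁺(E)`; and (5) the evaluation map of `𝔚_{g₀}[M]` is a homeomorphism of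
`M⁺(E)` onto its image in `ℝ^{𝔚_{g₀}[M]}` (an embedding). -/
theorem stmt19 {E : Type*} [TopologicalSpace E] [MeasurableSpace E] [BorelSpace E]
    (g₀ : ℝ → ℝ)
    (hg₀c : ContinuousOn g₀ (Set.Ioi 0)) (hg₀b : ∃ C, ∀ x ∈ Set.Ioi (0:ℝ), |g₀ x| ≤ C)
    (hg₀sep : SepPtsOn {g₀} (Set.Ioi 0)) (hg₀ssp : SSepPtsOn {g₀} (Set.Ioi 0))
    (M : Set (E → ℝ)) (hone : (fun _ => (1 : ℝ)) ∈ M) (hMcount : M.Countable)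
    (hMc : ∀ f ∈ M, Continuous f) (hMb : ∀ f ∈ M, ∃ C, ∀ x, |f x| ≤ C)
    (hsep : SepPts M) (hssp : SSepPts M)
    (hmul : ∀ f ∈ M, ∀ f' ∈ M, (fun x => f x * f' x) ∈ M) :
    TopologicalSpace.MetrizableSpace (Mplus E) ∧
    (∀ F ∈ Wfun' g₀ M, Continuous F ∧ ∃ C, ∀ μ : Mplus E, |F μ| ≤ C) ∧
    (∀ (μs : ℕ → Mplus E) (μ : Mplus E),
      (∀ F ∈ Wfun' g₀ M,
        Filter.Tendsto (fun n => F (μs n)) Filter.atTop (𝓝 (F μ))) →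
      Filter.Tendsto μs Filter.atTop (𝓝 μ)) ∧
    (SepPts (Wfun' g₀ M) ∧ SSepPts (Wfun' g₀ M)) ∧
    IsEmbedding (fun (μ : Mplus E) (F : Wfun' g₀ M) => (F : Mplus E → ℝ) μ) :=
  stmt19_general g₀ hg₀c hg₀b hg₀ssp M hone hMcount hMc hMb hssp hmul
end
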